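/- arXiv:2507.08521 — 7 statements merged into one kernel-verified Lean document; each statement's English description precedes it below -/
import Mathlib

section
/- Representation theorem for proper L⁰-labeling functions: Let S = Conv_{L⁰}{x_1,…,x_n} be an (n−1)-dimensional L⁰-simplex in L⁰(𝓕,ℝ^d), 𝒮 an L⁰-simplicial subdivision of S, and enumerate ext(𝒮') = {y_1,…,y_K}. Then for every proper L⁰-labeling function φ of 𝒮 there exist finitely many proper labeling functions ψ_1,…,ψ_M of 𝒮' and a measurable partition A_1,…,A_M of Ω such that for every k ∈ {1,…,K}, φ(y_k) = ∑_{m=1}^M 1_{A_m} ψ_m(y_k), i.e., φ(y_k) is the equivalence class of the function taking the constant value ψ_m(y_k) on A_m. -/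
open MeasureTheory Filter Set Topology

noncomputable section

namespace RandomBrouwer

variable {Ω : Type*} [MeasurableSpace Ω]

/-- `ℝ^d` with the Euclidean norm. -/
abbrev Ed (d : ℕ) : Type := EuclideanSpace ℝ (Fin d)

/-- `L⁰(𝓕,ℝ^d)`: equivalence classes (mod a.e. equality) of measurable functions `Ω → ℝ^d`. -/
abbrev L0 (μ : Measure Ω) (d : ℕ) : Type _ := Ω →ₘ[μ] Ed d

/-- A countable measurable partition of `Ω`. -/
def IsPartition (A : ℕ → Set Ω) : Prop :=
  (∀ n, MeasurableSet (A n)) ∧ (Pairwise fun m n => Disjoint (A m) (A n)) ∧ (⋃ n, A n) = univ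

/-- A finite measurable partition of `Ω`. -/
def IsFinPartition {m : ℕ} (A : Fin m → Set Ω) : Prop :=
  (∀ i, MeasurableSet (A i)) ∧ (Pairwise fun i j => Disjoint (A i) (A j)) ∧ (⋃ i, A i) = univ

variable (μ : Measure Ω) (d : ℕ)

/-- `z = ∑ₙ 1_{A n} (v n)`: `z` is the countable concatenation of the sequence `v`
along the countable measurable partition `A`. -/
def IsConcat {β : Type*} [TopologicalSpace β] (A : ℕ → Set Ω) (v : ℕ → Ω →ₘ[μ] β)
    (z : Ω →ₘ[μ] β) : Prop :=
  ∀ n, ∀ᵐ ω ∂μ, ω ∈ A n → z ω = v n ω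

/-- `z = ∑ᵢ 1_{A i} (v i)` for a finite partition. -/
def IsFinConcat {β : Type*} [TopologicalSpace β] {m : ℕ} (A : Fin m → Set Ω)
    (v : Fin m → Ω →ₘ[μ] β) (z : Ω →ₘ[μ] β) : Prop :=
  ∀ i, ∀ᵐ ω ∂μ, ω ∈ A i → z ω = v i ω

/-- A σ-stable subset of `L⁰(𝓕,ℝ^d)`. -/
def SigmaStable (G : Set (L0 μ d)) : Prop :=
  ∀ A : ℕ → Set Ω, IsPartition A → ∀ v : ℕ → L0 μ d, (∀ n, v n ∈ G) →
    ∀ z : L0 μ d, IsConcat μ A v z → z ∈ G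

/-- A σ-stable map on `G` (with values classes of `β`-valued functions). -/
def SigmaStableMapOn {β : Type*} [TopologicalSpace β] (G : Set (L0 μ d))
    (f : L0 μ d → (Ω →ₘ[μ] β)) : Prop :=
  ∀ A : ℕ → Set Ω, IsPartition A → ∀ v : ℕ → L0 μ d, (∀ n, v n ∈ G) →
    ∀ z ∈ G, IsConcat μ A v z → IsConcat μ A (fun n => f (v n)) (f z)

/-- A local map on `G`. -/
def LocalOn (G : Set (L0 μ d)) (h : L0 μ d → L0 μ d) : Prop :=
  ∀ x ∈ G, ∀ y ∈ G, ∀ A : Set Ω, MeasurableSet A →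
    (∀ᵐ ω ∂μ, ω ∈ A → x ω = y ω) → ∀ᵐ ω ∂μ, ω ∈ A → h x ω = h y ω

/-- `G` is L⁰-convex. -/
def L0Convex (G : Set (L0 μ d)) : Prop :=
  ∀ x ∈ G, ∀ y ∈ G, ∀ lam : Ω → ℝ, Measurable lam → (∀ ω, lam ω ∈ Icc (0:ℝ) 1) →
    ∀ z : L0 μ d, (∀ᵐ ω ∂μ, z ω = lam ω • x ω + (1 - lam ω) • y ω) → z ∈ G

/-- `G` is a.s. bounded. -/
def ASBounded (G : Set (L0 μ d)) : Prop :=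
  ∃ r : Ω → ℝ, Measurable r ∧ (∀ ω, 0 ≤ r ω) ∧ ∀ x ∈ G, ∀ᵐ ω ∂μ, ‖x ω‖ ≤ r ω

/-- `G` is `𝒯_{ε,λ}`-closed, i.e. sequentially closed under convergence in probability. -/
def TelClosed (G : Set (L0 μ d)) : Prop :=
  ∀ x : ℕ → L0 μ d, (∀ n, x n ∈ G) → ∀ z : L0 μ d,
    TendstoInMeasure μ (fun n => ⇑(x n)) atTop ⇑z → z ∈ G

/-- `f` is continuous in probability (`𝒯_{ε,λ}`-continuous) on `G`. -/
def ContInProbOn (G : Set (L0 μ d)) (f : L0 μ d → L0 μ d) : Prop :=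
  ∀ x : ℕ → L0 μ d, (∀ n, x n ∈ G) → ∀ z ∈ G,
    TendstoInMeasure μ (fun n => ⇑(x n)) atTop ⇑z →
    TendstoInMeasure μ (fun n => ⇑(f (x n))) atTop ⇑(f z)

/-- `y` is a random subsequence of `v`. -/
def IsRandomSubseq (v : ℕ → L0 μ d) (y : ℕ → L0 μ d) : Prop :=
  ∃ nk : ℕ → Ω → ℕ, (∀ k, Measurable (nk k)) ∧ (∀ k ω, nk k ω < nk (k + 1) ω) ∧
    ∀ k, ∀ᵐ ω ∂μ, y k ω = v (nk k ω) ω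

/-- `f` is random sequentially continuous on the σ-stable set `G`. -/
def RandSeqContOn (G : Set (L0 μ d)) (f : L0 μ d → L0 μ d) : Prop :=
  ∀ v : ℕ → L0 μ d, (∀ k, v k ∈ G) → ∀ z ∈ G,
    TendstoInMeasure μ (fun k => ⇑(v k)) atTop ⇑z →
    ∃ y : ℕ → L0 μ d, (∀ k, y k ∈ G) ∧ IsRandomSubseq μ d v y ∧
      TendstoInMeasure μ (fun k => ⇑(f (y k))) atTop ⇑(f z)

/-- The locally L⁰-convex topology `𝒯_c` on `L⁰(𝓕,ℝ^d)`, generated by random open balls. -/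
def Tc : TopologicalSpace (L0 μ d) :=
  .generateFrom {B | ∃ (x : L0 μ d) (r : Ω → ℝ), Measurable r ∧ (∀ᵐ ω ∂μ, 0 < r ω) ∧
    B = {y : L0 μ d | ∀ᵐ ω ∂μ, ‖x ω - y ω‖ < r ω}}

/-- The L⁰-convex hull `Conv_{L⁰}{x i : i}` of finitely many elements of `L⁰(𝓕,ℝ^d)`. -/
def ConvL0 {ι : Type*} [Fintype ι] (x : ι → L0 μ d) : Set (L0 μ d) :=
  {z | ∃ lam : ι → Ω → ℝ, (∀ i, Measurable (lam i)) ∧ (∀ i ω, lam i ω ∈ Icc (0:ℝ) 1) ∧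
    (∀ ω, ∑ i, lam i ω = 1) ∧ ∀ᵐ ω ∂μ, z ω = ∑ i, lam i ω • x i ω}

/-- `x 0, …, x (n-1)` are L⁰-affinely independent. -/
def L0AffineIndep {n : ℕ} [NeZero n] (x : Fin n → L0 μ d) : Prop :=
  ∀ ξ : Fin n → Ω → ℝ, (∀ i, Measurable (ξ i)) →
    (∀ᵐ ω ∂μ, ∑ i ∈ Finset.univ.erase (0 : Fin n), ξ i ω • (x i ω - x 0 ω) = 0) →
    ∀ i, i ≠ (0 : Fin n) → ∀ᵐ ω ∂μ, ξ i ω = 0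

/-- The σ-stable hull of a set `H`. -/
def sigmaHull (H : Set (L0 μ d)) : Set (L0 μ d) :=
  {z | ∃ (A : ℕ → Set Ω) (v : ℕ → L0 μ d), IsPartition A ∧ (∀ k, v k ∈ H) ∧ IsConcat μ A v z}

/-- An L⁰-simplicial subdivision of the L⁰-simplex with vertices `x 0, …, x (n-1)`,
together with its counterpart simplicial subdivision. -/
structure L0Subdivision {n : ℕ} [NeZero n] (x : Fin n → L0 μ d) where
  I : ℕ
  hI : 0 < I
  T : Fin I → Fin n → L0 μ d
  indepL0 : ∀ i, L0AffineIndep μ d (T i)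
  cover : ConvL0 μ d x = sigmaHull μ d (⋃ i, ConvL0 μ d (T i))
  faces : ∀ i j, ConvL0 μ d (T i) ∩ ConvL0 μ d (T j) = ∅ ∨
    ∃ J1 J2 : Finset (Fin n), J1.Nonempty ∧ J2.Nonempty ∧
      ConvL0 μ d (T i) ∩ ConvL0 μ d (T j) = ConvL0 μ d (fun k : J1 => T i k) ∧
      ConvL0 μ d (T i) ∩ ConvL0 μ d (T j) = ConvL0 μ d (fun k : J2 => T j k)
  indepR : ∀ i, AffineIndependent ℝ (T i)
  cover' : convexHull ℝ (Set.range x) = ⋃ i, convexHull ℝ (Set.range (T i))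
  faces' : ∀ i j, convexHull ℝ (Set.range (T i)) ∩ convexHull ℝ (Set.range (T j)) = ∅ ∨
    ∃ J1 J2 : Finset (Fin n), J1.Nonempty ∧ J2.Nonempty ∧
      convexHull ℝ (Set.range (T i)) ∩ convexHull ℝ (Set.range (T j))
        = convexHull ℝ (T i '' J1) ∧
      convexHull ℝ (Set.range (T i)) ∩ convexHull ℝ (Set.range (T j))
        = convexHull ℝ (T j '' J2)

/-- The set of vertices `ext(𝒮')` of the counterpart subdivision. -/
def L0Subdivision.extVerts {n : ℕ} [NeZero n] {x : Fin n → L0 μ d}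
    (S : L0Subdivision μ d x) : Set (L0 μ d) :=
  ⋃ i, Set.range (S.T i)

/-- `φ` is a proper L⁰-labeling function on the domain `D` (w.r.t. the base vertices `x`),
with labels in `{1,…,n}` (label `i+1` corresponding to the vertex `x i`). -/
def ProperL0Label {n : ℕ} [NeZero n] (x : Fin n → L0 μ d) (D : Set (L0 μ d))
    (φ : L0 μ d → (Ω →ₘ[μ] ℕ)) : Prop :=
  ∀ y ∈ D, ∀ lam : Fin n → Ω → ℝ, (∀ i, Measurable (lam i)) →
    (∀ i ω, lam i ω ∈ Icc (0:ℝ) 1) → (∀ ω, ∑ i, lam i ω = 1) →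
    (∀ᵐ ω ∂μ, y ω = ∑ i, lam i ω • x i ω) →
    ∀ i : Fin n, ∀ᵐ ω ∂μ, ¬(φ y ω = (i : ℕ) + 1 ∧ lam i ω = 0)

/-- `ψ` is a (classical) proper labeling function on the vertex set `V` of the counterpart
subdivision, with labels in `{1,…,n}`. -/
def ProperLabelR {n : ℕ} [NeZero n] (x : Fin n → L0 μ d) (V : Set (L0 μ d))
    (ψ : L0 μ d → ℕ) : Prop :=
  ∀ y ∈ V, ∀ α : Fin n → ℝ, (∀ i, α i ∈ Icc (0:ℝ) 1) → (∑ i, α i = 1) →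
    (y = ∑ i, α i • x i) → ∃ i : Fin n, ψ y = (i : ℕ) + 1 ∧ 0 < α i

/-- `h` is an L⁰-extreme point of `S`. -/
def IsL0ExtremePoint (S : Set (L0 μ d)) (h : L0 μ d) : Prop :=
  h ∈ S ∧ ∀ x ∈ S, ∀ y ∈ S, ∀ lam : Ω → ℝ, Measurable lam →
    (∀ᵐ ω ∂μ, lam ω ∈ Ioo (0:ℝ) 1) →
    (∀ᵐ ω ∂μ, h ω = lam ω • x ω + (1 - lam ω) • y ω) → x = h ∧ y = h


/-! Cut `Ω` according to the vector of labels `(φ (y k) ω)ₖ`: there are finitely many such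
vectors, and each one that occurs on a non-null set is a proper labeling of the vertices, since
a label `i + 1` on a non-null set forces the `i`-th barycentric coordinate to be positive.
The null cells are merged into a non-null one. -/

section FiniteValued

variable {Ω F : Type*} [MeasurableSpace Ω] {μ : Measure Ω}
  [MeasurableSpace F] [MeasurableSingletonClass F]

theorem exists_measurable_ae_eq_of_measure_fiber_ne_zero [Countable F] [NeZero μ] {g : Ω → F}
    (hg : Measurable g) :
    ∃ ĝ : Ω → {c : F // μ (g ⁻¹' {c}) ≠ 0}, Measurable ĝ ∧ (fun ω => (ĝ ω : F)) =ᵐ[μ] g := by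
  classical
  set N : Set F := {c | μ (g ⁻¹' {c}) = 0}
  have hN : μ (g ⁻¹' N) = 0 := by
    rw [← biUnion_preimage_singleton]
    exact (measure_biUnion_null_iff N.to_countable).2 fun _ hc => hc
  obtain ⟨c₀, hc₀⟩ : ∃ c₀, μ (g ⁻¹' {c₀}) ≠ 0 := by
    by_contra! h
    have hNuniv : N = univ := eq_univ_of_forall h
    rw [hNuniv, preimage_univ, Measure.measure_univ_eq_zero] at hN
    exact NeZero.ne μ hN
  refine ⟨fun ω => ⟨if g ω ∈ N then c₀ else g ω, ?_⟩, ?_, ?_⟩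
  · split_ifs with h
    exacts [hc₀, h]
  · exact (Measurable.ite (hg N.to_countable.measurableSet) measurable_const hg).subtype_mk
  · filter_upwards [measure_eq_zero_iff_ae_notMem.1 hN] with ω hω
    exact if_neg hω

theorem isFinPartition_preimage_singleton {M : ℕ} {f : Ω → F} (hf : Measurable f)
    (e : Fin M ≃ F) : IsFinPartition fun m => f ⁻¹' {e m} :=
  ⟨fun _ => hf (measurableSet_singleton _),
    fun _ _ hij => (disjoint_singleton.2 (e.injective.ne hij)).preimage f,
    eq_univ_of_forall fun ω => mem_iUnion.2 ⟨e.symm (f ω), by simp⟩⟩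

end FiniteValued

section Labeling

variable {Ω : Type*} [MeasurableSpace Ω] {μ : Measure Ω} {d : ℕ}

theorem subset_sigmaHull (H : Set (L0 μ d)) : H ⊆ sigmaHull μ d H := fun z hz =>
  ⟨fun j => {_ω | j = 0}, fun _ => z,
    ⟨fun _ => MeasurableSet.const _,
      fun _ _ hij => disjoint_left.2 fun _ hi hj => hij (hi.trans hj.symm),
      eq_univ_of_forall fun _ => mem_iUnion.2 ⟨0, rfl⟩⟩,
    fun _ => hz, fun _ => ae_of_all _ fun _ _ => rfl⟩

variable {n : ℕ} {x : Fin n → L0 μ d}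

theorem ProperL0Label.ae_ne_of_eq_sum [NeZero n] {D : Set (L0 μ d)} {φ : L0 μ d → (Ω →ₘ[μ] ℕ)}
    (hφ : ProperL0Label μ d x D φ) {z : L0 μ d} (hz : z ∈ D) {α : Fin n → ℝ}
    (hα : ∀ i, α i ∈ Icc (0 : ℝ) 1) (hsum : ∑ i, α i = 1) (hzα : z = ∑ i, α i • x i)
    {i : Fin n} (hi : α i = 0) : ∀ᵐ ω ∂μ, φ z ω ≠ i + 1 := by
  have hcoe : ∀ᵐ ω ∂μ, z ω = ∑ j, α j • x j ω := by
    filter_upwards [hzα ▸ AEEqFun.coeFn_fun_finsetSum Finset.univ fun j => α j • x j,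
      ae_all_iff.2 fun j => AEEqFun.coeFn_smul (α j) (x j)] with ω hsumω hsmulω
    rw [hsumω]
    exact Finset.sum_congr rfl fun j _ => hsmulω j
  filter_upwards [hφ z hz (fun j _ => α j) (fun _ => measurable_const) (fun j _ => hα j)
    (fun _ => hsum) hcoe i] with ω hω hlabel
  exact hω ⟨hlabel, hi⟩

variable {K : ℕ} {y : Fin K → L0 μ d} {c : Fin K → Fin n} {φ : L0 μ d → (Ω →ₘ[μ] ℕ)}

open Classical in
/-- Only meaningful when `c` agrees on repeated vertices: `y` need not be injective. -/
noncomputable def vertexLabeling (y : Fin K → L0 μ d) (c : Fin K → Fin n) (z : L0 μ d) : ℕ :=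
  if h : ∃ k, y k = z then c h.choose + 1 else 0

theorem vertexLabeling_apply (hc : μ {ω | ∀ k, φ (y k) ω = c k + 1} ≠ 0) (k : Fin K) :
    vertexLabeling y c (y k) = c k + 1 := by
  have h : ∃ k', y k' = y k := ⟨k, rfl⟩
  obtain ⟨ω, hω⟩ := nonempty_of_measure_ne_zero hc
  rw [vertexLabeling, dif_pos h, ← hω, ← hω, h.choose_spec]

theorem properLabelR_vertexLabeling [NeZero n] {D : Set (L0 μ d)} (hφ : ProperL0Label μ d x D φ)
    (hyD : ∀ k, y k ∈ D) (hc : μ {ω | ∀ k, φ (y k) ω = c k + 1} ≠ 0) :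
    ProperLabelR μ d x (range y) (vertexLabeling y c) := by
  rintro _ ⟨k, rfl⟩ α hα hsum hk
  refine ⟨c k, vertexLabeling_apply hc k, (hα _).1.lt_of_ne' fun h0 => ?_⟩
  obtain ⟨ω, hωc, hω⟩ := Measure.exists_mem_of_measure_ne_zero_of_ae hc
    (ae_restrict_of_ae (hφ.ae_ne_of_eq_sum (hyD k) hα hsum hk h0))
  exact hω (hωc k)

end Labeling

theorem representation_of_proper_L0_labeling_general {Ω : Type*} [MeasurableSpace Ω] (μ : Measure Ω)
    [IsProbabilityMeasure μ] (d : ℕ) (n : ℕ) [NeZero n]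
    (x : Fin n → L0 μ d)
    (𝒮 : L0Subdivision μ d x)
    (K : ℕ) (y : Fin K → L0 μ d) (hy : Set.range y = 𝒮.extVerts μ d)
    (φ : L0 μ d → (Ω →ₘ[μ] ℕ))
    (hval : ∀ z ∈ sigmaHull μ d (𝒮.extVerts μ d), ∀ᵐ ω ∂μ, 1 ≤ φ z ω ∧ φ z ω ≤ n)
    (hproper : ProperL0Label μ d x (sigmaHull μ d (𝒮.extVerts μ d)) φ) :
    ∃ (M : ℕ) (_ : 0 < M) (ψ : Fin M → L0 μ d → ℕ) (A : Fin M → Set Ω),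
      (∀ m, ProperLabelR μ d x (𝒮.extVerts μ d) (ψ m)) ∧
      IsFinPartition A ∧
      ∀ k : Fin K, ∀ m : Fin M, ∀ᵐ ω ∂μ, ω ∈ A m → φ (y k) ω = ψ m (y k) := by
  classical
  have hyD : ∀ k, y k ∈ sigmaHull μ d (𝒮.extVerts μ d) := fun k =>
    subset_sigmaHull _ (hy ▸ mem_range_self k)
  -- the label vector of `ω`, with label `i + 1` stored as `i : Fin n`
  set g : Ω → Fin K → Fin n := fun ω k => Fin.ofNat n (φ (y k) ω - 1)
  have hg : Measurable g := measurable_pi_lambda _ fun k =>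
    (measurable_from_nat (f := fun a => Fin.ofNat n (a - 1))).comp (φ (y k)).measurable
  have hφg : ∀ k, ∀ᵐ ω ∂μ, φ (y k) ω = g ω k + 1 := fun k => by
    filter_upwards [hval (y k) (hyD k)] with ω ⟨h1, hn⟩
    simp only [g, Fin.val_ofNat, Nat.mod_eq_of_lt (show φ (y k) ω - 1 < n by omega)]
    omega
  have hlabel : ∀ c : Fin K → Fin n, μ (g ⁻¹' {c}) ≠ 0 →
      μ {ω | ∀ k, φ (y k) ω = c k + 1} ≠ 0 := fun c hc =>
    ne_bot_of_le_ne_bot hc <| measure_mono_ae <| by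
      filter_upwards [ae_all_iff.2 hφg] with ω hω (hgω : g ω = c) k
      rw [hω k, hgω]
  obtain ⟨ĝ, hĝ, hĝg⟩ := exists_measurable_ae_eq_of_measure_fiber_ne_zero (μ := μ) hg
  let e := (Fintype.equivFin {c // μ (g ⁻¹' {c}) ≠ 0}).symm
  refine ⟨_, Fintype.card_pos_iff.2 ⟨ĝ (nonempty_of_isProbabilityMeasure μ).some⟩,
    fun m => vertexLabeling y (e m).1, fun m => ĝ ⁻¹' {e m},
    fun m => hy ▸ properLabelR_vertexLabeling hproper hyD (hlabel _ (e m).2),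
    isFinPartition_preimage_singleton hĝ e, fun k m => ?_⟩
  filter_upwards [hĝg, hφg k] with ω hĝω hφω (hω : ĝ ω = e m)
  rw [vertexLabeling_apply (hlabel _ (e m).2), hφω, ← hĝω, hω]

/-- Representation theorem for proper L⁰-labeling functions. -/
theorem representation_of_proper_L0_labeling {Ω : Type*} [MeasurableSpace Ω] (μ : Measure Ω)
    [IsProbabilityMeasure μ] (d : ℕ) (hd : 0 < d) (n : ℕ) [NeZero n]
    (x : Fin n → L0 μ d) (hx : L0AffineIndep μ d x)
    (𝒮 : L0Subdivision μ d x)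
    (K : ℕ) (y : Fin K → L0 μ d) (hy : Set.range y = 𝒮.extVerts μ d)
    (φ : L0 μ d → (Ω →ₘ[μ] ℕ))
    (hval : ∀ z ∈ sigmaHull μ d (𝒮.extVerts μ d), ∀ᵐ ω ∂μ, 1 ≤ φ z ω ∧ φ z ω ≤ n)
    (hstab : SigmaStableMapOn μ d (sigmaHull μ d (𝒮.extVerts μ d)) φ)
    (hproper : ProperL0Label μ d x (sigmaHull μ d (𝒮.extVerts μ d)) φ) :
    ∃ (M : ℕ) (_ : 0 < M) (ψ : Fin M → L0 μ d → ℕ) (A : Fin M → Set Ω),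
      (∀ m, ProperLabelR μ d x (𝒮.extVerts μ d) (ψ m)) ∧
      IsFinPartition A ∧
      ∀ k : Fin K, ∀ m : Fin M, ∀ᵐ ω ∂μ, ω ∈ A m → φ (y k) ω = ψ m (y k) :=
  representation_of_proper_L0_labeling_general μ d n x 𝒮 K y hy φ hval hproper

end RandomBrouwer
end
end

section
/- Let S = Conv_{L⁰}{x_1,…,x_n} be an (n−1)-dimensional L⁰-simplex in L⁰(𝓕,ℝ^d). For any sequence S^m = Conv_{L⁰}{x_1^m,…,x_n^m} (m ∈ ℕ) of (n−1)-dimensional L⁰-simplexes contained in S and any countable measurable partition (A_m) of Ω: (a) the set ∑_m 1_{A_m} S^m := {∑_m 1_{A_m} z_m : z_m ∈ S^m for each m} equals Conv_{L⁰}{∑_m 1_{A_m} x_1^m,…,∑_m 1_{A_m} x_n^m}; and (b) the elements ∑_m 1_{A_m} x_1^m,…,∑_m 1_{A_m} x_n^m are L⁰-affinely independent. Hence ∑_m 1_{A_m} S^m is an (n−1)-dimensional L⁰-simplex contained in S with these vertices. -/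
open MeasureTheory Filter Set Topology

noncomputable section

namespace RandomBrouwer

variable {Ω : Type*} [MeasurableSpace Ω]

variable (μ : Measure Ω) (d : ℕ)

/-! Weights of convex combinations chosen separately on the cells of a partition glue into
measurable weights (on each `ω`, take those of the first cell containing it), and one set of
weights restricts to every cell; so `Conv_{L⁰}` commutes with countable concatenation, and in
particular `Conv_{L⁰}{x}` is σ-stable, which gives the inclusion in `S`. L⁰-affine independence
is an almost-everywhere statement and is therefore checked cell by cell. -/

namespace IsPartition

open Classical

variable {A : ℕ → Set Ω} (hA : IsPartition A)
include hA

lemma exists_mem (ω : Ω) : ∃ m, ω ∈ A m :=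
  mem_iUnion.mp (hA.2.2 ▸ mem_univ ω)

def index (ω : Ω) : ℕ := Nat.find (hA.exists_mem ω)

lemma mem_index (ω : Ω) : ω ∈ A (hA.index ω) :=
  Nat.find_spec (hA.exists_mem ω)

lemma measurable_glue {β : Type*} [MeasurableSpace β] {f : ℕ → Ω → β}
    (hf : ∀ m, Measurable (f m)) : Measurable fun ω => f (hA.index ω) ω :=
  Measurable.find (p := fun m ω => ω ∈ A m) hf hA.1 hA.exists_mem

lemma ae_of_forall_ae_mem {μ : Measure Ω} {p : Ω → Prop}
    (h : ∀ m, ∀ᵐ ω ∂μ, ω ∈ A m → p ω) : ∀ᵐ ω ∂μ, p ω := by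
  filter_upwards [ae_all_iff.mpr h] with ω hω
  exact hω _ (hA.mem_index ω)

end IsPartition

section

variable {μ d} {ι : Type*} [Fintype ι] {A : ℕ → Set Ω}

lemma exists_ae_eq_sum_smul {lam : ι → Ω → ℝ} (hlam : ∀ i, Measurable (lam i))
    (x : ι → L0 μ d) : ∃ y : L0 μ d, ∀ᵐ ω ∂μ, y ω = ∑ i, lam i ω • x i ω :=
  have hF : AEStronglyMeasurable (fun ω => ∑ i, lam i ω • x i ω) μ :=
    Finset.aestronglyMeasurable_fun_sum _ fun i _ =>
      (hlam i).aestronglyMeasurable.smul (x i).aestronglyMeasurable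
  ⟨AEEqFun.mk _ hF, AEEqFun.coeFn_mk _ hF⟩

lemma IsConcat.mem_convL0 (hA : IsPartition A) {xm : ℕ → ι → L0 μ d} {X : ι → L0 μ d}
    (hX : ∀ j, IsConcat μ A (fun m => xm m j) (X j)) {v : ℕ → L0 μ d}
    (hv : ∀ m, v m ∈ ConvL0 μ d (xm m)) {z : L0 μ d} (hz : IsConcat μ A v z) :
    z ∈ ConvL0 μ d X := by
  choose lam hmeas hIcc hsum hlam using hv
  refine ⟨fun i ω => lam (hA.index ω) i ω, fun i => hA.measurable_glue fun m => hmeas m i,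
    fun i ω => hIcc _ i ω, fun ω => hsum _ ω, ?_⟩
  filter_upwards [ae_all_iff.mpr hz, ae_all_iff.mpr hlam,
    ae_all_iff.mpr fun j => ae_all_iff.mpr (hX j)] with ω hzω hlamω hXω
  have hω := hA.mem_index ω
  rw [hzω _ hω, hlamω]
  exact Finset.sum_congr rfl fun i _ => by rw [hXω i _ hω]

lemma sigmaStable_convL0 (x : ι → L0 μ d) : SigmaStable μ d (ConvL0 μ d x) :=
  fun _ hA _ hv _ hz =>
    hz.mem_convL0 hA (xm := fun _ => x) (fun _ _ => ae_of_all _ fun _ _ => rfl) hv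

lemma exists_isConcat_of_mem_convL0 {xm : ℕ → ι → L0 μ d} {X : ι → L0 μ d}
    (hX : ∀ j, IsConcat μ A (fun m => xm m j) (X j)) {z : L0 μ d} (hz : z ∈ ConvL0 μ d X) :
    ∃ v : ℕ → L0 μ d, (∀ m, v m ∈ ConvL0 μ d (xm m)) ∧ IsConcat μ A v z := by
  obtain ⟨lam, hmeas, hIcc, hsum, hlam⟩ := hz
  choose v hv using fun m => exists_ae_eq_sum_smul hmeas (xm m)
  refine ⟨v, fun m => ⟨lam, hmeas, hIcc, hsum, hv m⟩, fun m => ?_⟩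
  filter_upwards [hlam, hv m, ae_all_iff.mpr fun j => hX j m] with ω hlamω hvω hXω hω
  rw [hlamω, hvω]
  exact Finset.sum_congr rfl fun i _ => by rw [hXω i hω]

variable {n : ℕ} [NeZero n]

lemma L0AffineIndep.ae_eq_zero_on {x : Fin n → L0 μ d} (hx : L0AffineIndep μ d x)
    {ξ : Fin n → Ω → ℝ} (hξ : ∀ i, Measurable (ξ i)) {B : Set Ω} (hB : MeasurableSet B)
    (h : ∀ᵐ ω ∂μ, ω ∈ B → ∑ i ∈ Finset.univ.erase 0, ξ i ω • (x i ω - x 0 ω) = 0)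
    {i : Fin n} (hi : i ≠ 0) : ∀ᵐ ω ∂μ, ω ∈ B → ξ i ω = 0 := by
  have hB0 : ∀ᵐ ω ∂μ,
      ∑ j ∈ Finset.univ.erase 0, B.indicator (ξ j) ω • (x j ω - x 0 ω) = 0 := by
    filter_upwards [h] with ω hω
    by_cases hωB : ω ∈ B
    · simpa only [indicator_of_mem hωB] using hω hωB
    · simp only [indicator_of_notMem hωB, zero_smul, Finset.sum_const_zero]
  filter_upwards [hx _ (fun j => (hξ j).indicator hB) hB0 i hi] with ω hω hωB
  rwa [indicator_of_mem hωB] at hω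

lemma L0AffineIndep.of_isConcat (hA : IsPartition A) {xm : ℕ → Fin n → L0 μ d}
    (hxm : ∀ m, L0AffineIndep μ d (xm m)) {X : Fin n → L0 μ d}
    (hX : ∀ j, IsConcat μ A (fun m => xm m j) (X j)) : L0AffineIndep μ d X := by
  intro ξ hξ hsum i hi
  refine hA.ae_of_forall_ae_mem fun m => (hxm m).ae_eq_zero_on hξ (hA.1 m) ?_ hi
  filter_upwards [hsum, ae_all_iff.mpr fun j => hX j m] with ω hsumω hXω hω
  rw [← hsumω]
  exact Finset.sum_congr rfl fun j _ => by rw [hXω j hω, hXω 0 hω]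

end

theorem concat_of_L0_simplexes_general {Ω : Type*} [MeasurableSpace Ω] (μ : Measure Ω)
    (d : ℕ) (n : ℕ) [NeZero n]
    (x : Fin n → L0 μ d)
    (xm : ℕ → Fin n → L0 μ d) (hxm : ∀ m, L0AffineIndep μ d (xm m))
    (hsub : ∀ m, ConvL0 μ d (xm m) ⊆ ConvL0 μ d x)
    (A : ℕ → Set Ω) (hA : IsPartition A)
    (X : Fin n → L0 μ d) (hX : ∀ j, IsConcat μ A (fun m => xm m j) (X j)) :
    -- (a) `∑ₘ 1_{A m} S^m = Conv_{L⁰}{∑ₘ 1_{A m} (x j m) : j}`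
    {z : L0 μ d | ∃ v : ℕ → L0 μ d, (∀ m, v m ∈ ConvL0 μ d (xm m)) ∧ IsConcat μ A v z}
        = ConvL0 μ d X ∧
    -- (b) the concatenated vertices are L⁰-affinely independent
    L0AffineIndep μ d X ∧
    -- hence `∑ₘ 1_{A m} S^m` is an `(n-1)`-dimensional L⁰-simplex contained in `S`
    ConvL0 μ d X ⊆ ConvL0 μ d x := by
  have hconcat : {z : L0 μ d | ∃ v : ℕ → L0 μ d, (∀ m, v m ∈ ConvL0 μ d (xm m)) ∧
      IsConcat μ A v z} = ConvL0 μ d X :=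
    Subset.antisymm (fun _ ⟨_, hv, hz⟩ => hz.mem_convL0 hA hX hv)
      fun _ hz => exists_isConcat_of_mem_convL0 hX hz
  refine ⟨hconcat, L0AffineIndep.of_isConcat hA hxm hX, ?_⟩
  rw [← hconcat]
  rintro z ⟨v, hv, hz⟩
  exact sigmaStable_convL0 x A hA v (fun m => hsub m (hv m)) z hz

/-- Countable concatenations of L⁰-simplexes contained in an L⁰-simplex. -/
theorem concat_of_L0_simplexes {Ω : Type*} [MeasurableSpace Ω] (μ : Measure Ω)
    [IsProbabilityMeasure μ] (d : ℕ) (hd : 0 < d) (n : ℕ) [NeZero n]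
    (x : Fin n → L0 μ d) (hx : L0AffineIndep μ d x)
    (xm : ℕ → Fin n → L0 μ d) (hxm : ∀ m, L0AffineIndep μ d (xm m))
    (hsub : ∀ m, ConvL0 μ d (xm m) ⊆ ConvL0 μ d x)
    (A : ℕ → Set Ω) (hA : IsPartition A)
    (X : Fin n → L0 μ d) (hX : ∀ j, IsConcat μ A (fun m => xm m j) (X j)) :
    -- (a) `∑ₘ 1_{A m} S^m = Conv_{L⁰}{∑ₘ 1_{A m} (x j m) : j}`
    {z : L0 μ d | ∃ v : ℕ → L0 μ d, (∀ m, v m ∈ ConvL0 μ d (xm m)) ∧ IsConcat μ A v z}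
        = ConvL0 μ d X ∧
    -- (b) the concatenated vertices are L⁰-affinely independent
    L0AffineIndep μ d X ∧
    -- hence `∑ₘ 1_{A m} S^m` is an `(n-1)`-dimensional L⁰-simplex contained in `S`
    ConvL0 μ d X ⊆ ConvL0 μ d x :=
  concat_of_L0_simplexes_general μ d n x xm hxm hsub A hA X hX

end RandomBrouwer
end
end

section
/- Let S = Conv_{L⁰}{x_1,…,x_n} be an (n−1)-dimensional L⁰-simplex in L⁰(𝓕,ℝ^d). Then the set of L⁰-extreme points of S is exactly the σ-stable hull of the vertex set {x_1,…,x_n}; explicitly, h ∈ S is an L⁰-extreme point of S if and only if there is a measurable partition (A_1,…,A_n) of Ω such that h = ∑_{i=1}^n 1_{A_i} x_i. -/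
open MeasureTheory Filter Set Topology

noncomputable section

namespace RandomBrouwer

variable {Ω : Type*} [MeasurableSpace Ω]

variable (μ : Measure Ω) (d : ℕ)

/-!
Write `h = ∑ᵢ λᵢ xᵢ` with random barycentric weights `λ`. Where some `λᵢ ∈ (0,1)`, `h` is a
proper convex combination of `xᵢ` and another point of the simplex, so extremality forces
`h = xᵢ` there; by uniqueness of barycentric coordinates this means `λᵢ = 1`, so that set is
null. Hence every `λᵢ` is a.s. `0` or `1`, and the sets where `λᵢ` is maximal yield the
partition. Conversely, if `h = xᵢ` on `Aᵢ` and `h = ℓ y + (1 - ℓ) z`, uniqueness of coordinates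
on `Aᵢ` makes the `i`-th weight of the mixture equal to `1`, which forces `y = z = xᵢ` on `Aᵢ`.
-/

section Weights

variable {ι : Type*} [Fintype ι]

theorem sum_smul_eq_of_apply_eq_one {M : Type*} [AddCommMonoid M] [Module ℝ M] {a : ι → ℝ}
    (v : ι → M) (ha : ∀ j, 0 ≤ a j) (hs : ∑ j, a j = 1) {i : ι} (hi : a i = 1) :
    ∑ j, a j • v j = v i := by
  classical
  have hrest : ∑ j ∈ Finset.univ.erase i, a j = 0 := by
    rw [← Finset.add_sum_erase _ _ (Finset.mem_univ i), hi] at hs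
    linarith
  have hzero : ∀ j ≠ i, a j = 0 := fun j hj =>
    (Finset.sum_eq_zero_iff_of_nonneg fun k _ => ha k).1 hrest j
      (Finset.mem_erase.2 ⟨hj, Finset.mem_univ j⟩)
  rw [Finset.sum_eq_single i (fun j _ hj => by rw [hzero j hj, zero_smul]) (by simp), hi,
    one_smul]

theorem sum_smul_mix {M : Type*} [AddCommGroup M] [Module ℝ M] (ℓ : ℝ) (a b : ι → ℝ)
    (v : ι → M) :
    ∑ j, (ℓ * a j + (1 - ℓ) * b j) • v j = ℓ • ∑ j, a j • v j + (1 - ℓ) • ∑ j, b j • v j := by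
  simp only [add_smul, mul_smul, Finset.sum_add_distrib, Finset.smul_sum]

theorem eq_one_of_forall_le_of_sum_eq_one {a : ι → ℝ} (h01 : ∀ j, a j = 0 ∨ a j = 1)
    (hs : ∑ j, a j = 1) {i : ι} (hi : ∀ j, a j ≤ a i) : a i = 1 := by
  refine (h01 i).resolve_left fun hi0 => ?_
  have hzero : ∀ j, a j = 0 := fun j => (h01 j).resolve_right fun hj => by linarith [hi j]
  simp [hzero] at hs

theorem eq_one_of_mix_eq_one {ℓ a b : ℝ} (hℓ : ℓ ∈ Ioo (0 : ℝ) 1) (ha : a ≤ 1) (hb : b ≤ 1)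
    (h : ℓ * a + (1 - ℓ) * b = 1) : a = 1 := by
  nlinarith [hℓ.1, hℓ.2]

structure IsConvexWeights (lam : ι → Ω → ℝ) : Prop where
  measurable : ∀ i, Measurable (lam i)
  mem_Icc : ∀ i ω, lam i ω ∈ Icc (0 : ℝ) 1
  sum_eq_one : ∀ ω, ∑ i, lam i ω = 1

theorem IsConvexWeights.of_nonneg {lam : ι → Ω → ℝ} (hm : ∀ i, Measurable (lam i))
    (h0 : ∀ i ω, 0 ≤ lam i ω) (hs : ∀ ω, ∑ i, lam i ω = 1) : IsConvexWeights lam where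
  measurable := hm
  mem_Icc i ω := ⟨h0 i ω, hs ω ▸ Finset.single_le_sum (fun j _ => h0 j ω) (Finset.mem_univ i)⟩
  sum_eq_one := hs

theorem mem_convL0_iff {μ : Measure Ω} {d : ℕ} {x : ι → L0 μ d} {z : L0 μ d} :
    z ∈ ConvL0 μ d x ↔ ∃ lam, IsConvexWeights lam ∧ ∀ᵐ ω ∂μ, z ω = ∑ i, lam i ω • x i ω :=
  ⟨fun ⟨lam, hm, hr, hs, hz⟩ => ⟨lam, ⟨hm, hr, hs⟩, hz⟩,
    fun ⟨lam, ⟨hm, hr, hs⟩, hz⟩ => ⟨lam, hm, hr, hs, hz⟩⟩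

theorem IsConvexWeights.exists_mem_convL0 {lam : ι → Ω → ℝ} (hw : IsConvexWeights lam)
    {μ : Measure Ω} {d : ℕ} (x : ι → L0 μ d) :
    ∃ z ∈ ConvL0 μ d x, ∀ᵐ ω ∂μ, z ω = ∑ i, lam i ω • x i ω := by
  have hmeas : AEStronglyMeasurable (fun ω => ∑ i, lam i ω • x i ω) μ :=
    Finset.aestronglyMeasurable_fun_sum _ fun i _ =>
      (hw.measurable i).aestronglyMeasurable.smul (x i).aestronglyMeasurable
  exact ⟨AEEqFun.mk _ hmeas, mem_convL0_iff.2 ⟨lam, hw, AEEqFun.coeFn_mk _ hmeas⟩,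
    AEEqFun.coeFn_mk _ hmeas⟩

theorem IsConvexWeights.sub_mul_div {lam α : ι → Ω → ℝ} (hw : IsConvexWeights lam)
    (hα : IsConvexWeights α) {ℓ : Ω → ℝ} (hℓm : Measurable ℓ) (hℓ : ∀ ω, ℓ ω < 1)
    (hle : ∀ j ω, ℓ ω * α j ω ≤ lam j ω) :
    IsConvexWeights fun j ω => (lam j ω - ℓ ω * α j ω) / (1 - ℓ ω) := by
  refine .of_nonneg (fun j => ((hw.measurable j).sub (hℓm.mul (hα.measurable j))).div
    (measurable_const.sub hℓm)) (fun j ω => div_nonneg (sub_nonneg.2 (hle j ω))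
    (sub_nonneg.2 (hℓ ω).le)) fun ω => ?_
  rw [← Finset.sum_div, Finset.sum_sub_distrib, ← Finset.mul_sum, hw.sum_eq_one,
    hα.sum_eq_one, mul_one, div_self (sub_ne_zero.2 (hℓ ω).ne')]

theorem IsConvexWeights.exists_split [DecidableEq ι] {lam : ι → Ω → ℝ}
    (hw : IsConvexWeights lam) (i : ι) :
    ∃ (ℓ : Ω → ℝ) (α β : ι → Ω → ℝ), Measurable ℓ ∧ (∀ ω, ℓ ω ∈ Ioo (0 : ℝ) 1) ∧
      IsConvexWeights α ∧ IsConvexWeights β ∧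
      (∀ j ω, lam j ω = ℓ ω * α j ω + (1 - ℓ ω) * β j ω) ∧
      ∀ ω, lam i ω ∈ Ioo (0 : ℝ) 1 → α i ω = 1 := by
  set B := {ω | lam i ω ∈ Ioo (0 : ℝ) 1}
  have hB : MeasurableSet B := hw.measurable i measurableSet_Ioo
  set ℓ := B.piecewise (lam i) fun _ => 1 / 2
  set α : ι → Ω → ℝ := fun j => B.piecewise (fun _ => (Pi.single i 1 : ι → ℝ) j) (lam j)
  have hℓm : Measurable ℓ := (hw.measurable i).piecewise hB measurable_const
  have hℓ : ∀ ω, ℓ ω ∈ Ioo (0 : ℝ) 1 := fun ω => by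
    by_cases hω : ω ∈ B
    · rw [show ℓ ω = lam i ω from piecewise_eq_of_mem _ _ _ hω]
      exact hω
    · simp only [ℓ, piecewise_eq_of_notMem _ _ _ hω]
      norm_num
  have hα : IsConvexWeights α := by
    refine .of_nonneg (fun j => measurable_const.piecewise hB (hw.measurable j)) (fun j ω => ?_)
      fun ω => ?_
    · by_cases hω : ω ∈ B
      · simp only [α, piecewise_eq_of_mem _ _ _ hω, Pi.single_apply]
        split_ifs <;> norm_num
      · simpa [α, hω] using (hw.mem_Icc j ω).1
    · by_cases hω : ω ∈ B
      · simp [α, hω]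
      · simpa [α, hω] using hw.sum_eq_one ω
  have hle : ∀ j ω, ℓ ω * α j ω ≤ lam j ω := fun j ω => by
    have h0 := (hw.mem_Icc j ω).1
    by_cases hω : ω ∈ B
    · simp only [ℓ, α, piecewise_eq_of_mem _ _ _ hω, Pi.single_apply]
      split_ifs with hj <;> [subst hj; skip] <;> linarith
    · simp only [ℓ, α, piecewise_eq_of_notMem _ _ _ hω]
      linarith
  refine ⟨ℓ, α, _, hℓm, hℓ, hα, hw.sub_mul_div hα hℓm (fun ω => (hℓ ω).2) hle,
    fun j ω => ?_, fun ω hω => ?_⟩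
  · field_simp [sub_ne_zero.2 (hℓ ω).2.ne']
    ring
  · simp [α, piecewise_eq_of_mem _ _ _ (show ω ∈ B from hω)]

end Weights

section Partition

variable {m : ℕ} {A : Fin m → Set Ω}

theorem IsFinPartition.exists_mem (hA : IsFinPartition A) (ω : Ω) : ∃ i, ω ∈ A i :=
  mem_iUnion.1 (hA.2.2 ▸ mem_univ ω)

theorem IsFinPartition.ae_eq_of_forall {μ : Measure Ω} {β : Type*} {f g : Ω → β}
    (hA : IsFinPartition A) (hfg : ∀ i, ∀ᵐ ω ∂μ, ω ∈ A i → f ω = g ω) : f =ᵐ[μ] g := by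
  filter_upwards [ae_all_iff.2 hfg] with ω hω
  obtain ⟨i, hi⟩ := hA.exists_mem ω
  exact hω i hi

theorem IsFinPartition.isConvexWeights_indicator (hA : IsFinPartition A) :
    IsConvexWeights fun i => (A i).indicator (1 : Ω → ℝ) := by
  refine .of_nonneg (fun i => measurable_const.indicator (hA.1 i))
    (fun i ω => indicator_nonneg (fun _ _ => zero_le_one) ω) fun ω => ?_
  obtain ⟨i, hi⟩ := hA.exists_mem ω
  rw [Finset.sum_eq_single i (fun j _ hji => indicator_of_notMem
    (disjoint_left.1 (hA.2.1 hji.symm) hi) _) (by simp), indicator_of_mem hi, Pi.one_apply]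

theorem exists_isFinPartition_forall_le [NeZero m] (f : Fin m → Ω → ℝ)
    (hf : ∀ i, Measurable (f i)) :
    ∃ A : Fin m → Set Ω, IsFinPartition A ∧ ∀ i, ∀ ω ∈ A i, ∀ j, f j ω ≤ f i ω := by
  set E : Fin m → Set Ω := fun i => ⋂ j, {ω | f j ω ≤ f i ω}
  have hE : ∀ i, MeasurableSet (E i) := fun i =>
    MeasurableSet.iInter fun j => measurableSet_le (hf j) (hf i)
  refine ⟨disjointed E, ⟨fun i => disjointedRec (fun _ _ ht => ht.diff (hE _)) (hE i),
    disjoint_disjointed E, ?_⟩, fun i ω hω j => mem_iInter.1 (disjointed_subset E i hω) j⟩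
  refine iUnion_disjointed.trans (eq_univ_of_forall fun ω => mem_iUnion.2 ?_)
  obtain ⟨i, -, hi⟩ := Finset.exists_max_image Finset.univ (fun i => f i ω) Finset.univ_nonempty
  exact ⟨i, mem_iInter.2 fun j => hi j (Finset.mem_univ j)⟩

theorem IsFinPartition.mem_convL0 {μ : Measure Ω} {d : ℕ} (hA : IsFinPartition A)
    {v : Fin m → L0 μ d} {h : L0 μ d} (hh : IsFinConcat μ A v h) : h ∈ ConvL0 μ d v := by
  have hw := hA.isConvexWeights_indicator
  refine mem_convL0_iff.2 ⟨_, hw, ?_⟩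
  filter_upwards [ae_all_iff.2 hh] with ω hω
  obtain ⟨i, hi⟩ := hA.exists_mem ω
  rw [hω i hi, sum_smul_eq_of_apply_eq_one _ (fun j => (hw.mem_Icc j ω).1) (hw.sum_eq_one ω)
    (indicator_of_mem hi 1)]

end Partition

section Simplex

variable {μ : Measure Ω} {d n : ℕ} [NeZero n] {x : Fin n → L0 μ d}

theorem L0AffineIndep.ae_eq_zero (hx : L0AffineIndep μ d x) {ξ : Fin n → Ω → ℝ}
    (hm : ∀ i, Measurable (ξ i)) (hs : ∀ ω, ∑ i, ξ i ω = 0)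
    (h0 : ∀ᵐ ω ∂μ, ∑ i, ξ i ω • x i ω = 0) (i : Fin n) : ∀ᵐ ω ∂μ, ξ i ω = 0 := by
  have hdiff : ∀ᵐ ω ∂μ, ∑ i ∈ Finset.univ.erase 0, ξ i ω • (x i ω - x 0 ω) = 0 := by
    filter_upwards [h0] with ω hω
    rw [Finset.sum_erase _ (by simp), Finset.sum_congr rfl fun i _ => smul_sub _ _ _,
      Finset.sum_sub_distrib, ← Finset.sum_smul, hs ω, hω, zero_smul, sub_zero]
  have hne : ∀ᵐ ω ∂μ, ∀ i, i ≠ 0 → ξ i ω = 0 := ae_all_iff.2 fun i =>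
    if hi : i = 0 then ae_of_all _ fun _ h => absurd hi h
    else (hx ξ hm hdiff i hi).mono fun _ h _ => h
  filter_upwards [hne] with ω hω
  rcases eq_or_ne i 0 with rfl | hi
  · have hsum := hs ω
    rwa [← Finset.add_sum_erase _ _ (Finset.mem_univ 0),
      Finset.sum_eq_zero fun j hj => hω j (Finset.ne_of_mem_erase hj), add_zero] at hsum
  · exact hω i hi

theorem L0AffineIndep.ae_eq_one_of_sum_smul_eq (hx : L0AffineIndep μ d x)
    {c : Fin n → Ω → ℝ} (hc : ∀ j, Measurable (c j)) (hs : ∀ ω, ∑ j, c j ω = 1)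
    {B : Set Ω} (hB : MeasurableSet B) {i : Fin n}
    (heq : ∀ᵐ ω ∂μ, ω ∈ B → ∑ j, c j ω • x j ω = x i ω) : ∀ᵐ ω ∂μ, ω ∈ B → c i ω = 1 := by
  set ξ : Fin n → Ω → ℝ := fun j => B.indicator fun ω => c j ω - (Pi.single i 1 : Fin n → ℝ) j
  have hξs : ∀ ω, ∑ j, ξ j ω = 0 := fun ω => by
    by_cases hω : ω ∈ B
    · simp [ξ, hω, Finset.sum_sub_distrib, hs ω]
    · simp [ξ, hω]
  have hξx : ∀ᵐ ω ∂μ, ∑ j, ξ j ω • x j ω = 0 := by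
    filter_upwards [heq] with ω hω
    by_cases hωB : ω ∈ B
    · simp [ξ, hωB, sub_smul, Finset.sum_sub_distrib, hω hωB, Pi.single_apply]
    · simp [ξ, hωB]
  filter_upwards [hx.ae_eq_zero (fun j => ((hc j).sub measurable_const).indicator hB) hξs hξx i]
    with ω hω hωB
  simpa [ξ, hωB, sub_eq_zero] using hω

theorem IsL0ExtremePoint.ae_eq_zero_or_one (hx : L0AffineIndep μ d x) {h : L0 μ d}
    (hext : IsL0ExtremePoint μ d (ConvL0 μ d x) h) {lam : Fin n → Ω → ℝ}
    (hw : IsConvexWeights lam) (hh : ∀ᵐ ω ∂μ, h ω = ∑ j, lam j ω • x j ω) (i : Fin n) :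
    ∀ᵐ ω ∂μ, lam i ω = 0 ∨ lam i ω = 1 := by
  obtain ⟨ℓ, α, β, hℓm, hℓ, hα, hβ, hmix, hαi⟩ := hw.exists_split i
  obtain ⟨y, hy, hyα⟩ := hα.exists_mem_convL0 x
  obtain ⟨z, hz, hzβ⟩ := hβ.exists_mem_convL0 x
  have hyh : y = h := (hext.2 y hy z hz ℓ hℓm (ae_of_all _ hℓ) (by
    filter_upwards [hh, hyα, hzβ] with ω hhω hyω hzω
    simp only [hhω, hyω, hzω, hmix, sum_smul_mix])).1
  subst hyh
  have hvertex : ∀ᵐ ω ∂μ, ω ∈ {ω | lam i ω ∈ Ioo (0 : ℝ) 1} →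
      ∑ j, lam j ω • x j ω = x i ω := by
    filter_upwards [hh, hyα] with ω hhω hyω hω
    rw [← hhω, hyω, sum_smul_eq_of_apply_eq_one _ (fun j => (hα.mem_Icc j ω).1)
      (hα.sum_eq_one ω) (hαi ω hω)]
  filter_upwards [hx.ae_eq_one_of_sum_smul_eq hw.measurable hw.sum_eq_one
    (hw.measurable i measurableSet_Ioo) hvertex] with ω hω
  by_contra hne
  obtain ⟨hne0, hne1⟩ := not_or.1 hne
  have hIoo : lam i ω ∈ Ioo (0 : ℝ) 1 :=
    ⟨(hw.mem_Icc i ω).1.lt_of_ne' hne0, (hw.mem_Icc i ω).2.lt_of_ne hne1⟩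
  exact hne1 (hω hIoo)

theorem IsL0ExtremePoint.exists_isFinConcat (hx : L0AffineIndep μ d x) {h : L0 μ d}
    (hext : IsL0ExtremePoint μ d (ConvL0 μ d x) h) :
    ∃ A : Fin n → Set Ω, IsFinPartition A ∧ IsFinConcat μ A x h := by
  obtain ⟨lam, hw, hh⟩ := mem_convL0_iff.1 hext.1
  obtain ⟨A, hA, hmax⟩ := exists_isFinPartition_forall_le lam hw.measurable
  refine ⟨A, hA, fun i => ?_⟩
  filter_upwards [hh, ae_all_iff.2 (hext.ae_eq_zero_or_one hx hw hh)] with ω hhω h01 hω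
  rw [hhω, sum_smul_eq_of_apply_eq_one _ (fun j => (hw.mem_Icc j ω).1) (hw.sum_eq_one ω)
    (eq_one_of_forall_le_of_sum_eq_one h01 (hw.sum_eq_one ω) (hmax i ω hω))]

variable {h : L0 μ d}

theorem IsFinPartition.eq_of_mix (hx : L0AffineIndep μ d x) {A : Fin n → Set Ω}
    (hA : IsFinPartition A) (hh : IsFinConcat μ A x h) {y z : L0 μ d} (hy : y ∈ ConvL0 μ d x)
    (hz : z ∈ ConvL0 μ d x) {ℓ : Ω → ℝ} (hℓm : Measurable ℓ)
    (hℓ : ∀ᵐ ω ∂μ, ℓ ω ∈ Ioo (0 : ℝ) 1)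
    (hmix : ∀ᵐ ω ∂μ, h ω = ℓ ω • y ω + (1 - ℓ ω) • z ω) : y = h := by
  obtain ⟨a, ha, hya⟩ := mem_convL0_iff.1 hy
  obtain ⟨b, hb, hzb⟩ := mem_convL0_iff.1 hz
  refine AEEqFun.ext (hA.ae_eq_of_forall fun i => ?_)
  have hcoeff : ∀ᵐ ω ∂μ, ω ∈ A i → ℓ ω * a i ω + (1 - ℓ ω) * b i ω = 1 :=
    hx.ae_eq_one_of_sum_smul_eq (c := fun j ω => ℓ ω * a j ω + (1 - ℓ ω) * b j ω)
      (fun j => (hℓm.mul (ha.measurable j)).add ((measurable_const.sub hℓm).mul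
        (hb.measurable j)))
      (fun ω => by simp [Finset.sum_add_distrib, ← Finset.mul_sum, ha.sum_eq_one,
        hb.sum_eq_one])
      (hA.1 i) (by
        filter_upwards [hh i, hmix, hya, hzb] with ω hhω hmixω hyω hzω hω
        rw [sum_smul_mix, ← hyω, ← hzω, ← hmixω, hhω hω])
  filter_upwards [hcoeff, hh i, hya, hℓ] with ω hcω hhω hyω hℓω hω
  rw [hyω, sum_smul_eq_of_apply_eq_one _ (fun j => (ha.mem_Icc j ω).1) (ha.sum_eq_one ω)
    (eq_one_of_mix_eq_one hℓω (ha.mem_Icc i ω).2 (hb.mem_Icc i ω).2 (hcω hω)), hhω hω]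

theorem IsFinPartition.isL0ExtremePoint (hx : L0AffineIndep μ d x) {A : Fin n → Set Ω}
    (hA : IsFinPartition A) (hh : IsFinConcat μ A x h) :
    IsL0ExtremePoint μ d (ConvL0 μ d x) h := by
  refine ⟨hA.mem_convL0 hh, fun y hy z hz ℓ hℓm hℓ hmix =>
    ⟨hA.eq_of_mix hx hh hy hz hℓm hℓ hmix, hA.eq_of_mix hx hh hz hy (ℓ := fun ω => 1 - ℓ ω)
      (measurable_const.sub hℓm) (hℓ.mono fun ω hω => ⟨sub_pos.2 hω.2, sub_lt_self 1 hω.1⟩)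
      ?_⟩⟩
  filter_upwards [hmix] with ω hω
  rw [hω, sub_sub_cancel, add_comm]

end Simplex

theorem extreme_points_of_L0_simplex_general {Ω : Type*} [MeasurableSpace Ω] (μ : Measure Ω)
    (d : ℕ) (n : ℕ) [NeZero n]
    (x : Fin n → L0 μ d) (hx : L0AffineIndep μ d x)
    (h : L0 μ d) :
    IsL0ExtremePoint μ d (ConvL0 μ d x) h ↔
      ∃ A : Fin n → Set Ω, IsFinPartition A ∧ ∀ i, ∀ᵐ ω ∂μ, ω ∈ A i → h ω = x i ω :=
  ⟨fun hext => hext.exists_isFinConcat hx, fun ⟨_, hA, hh⟩ => hA.isL0ExtremePoint hx hh⟩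

/-- The L⁰-extreme points of an L⁰-simplex are exactly the countable
(here: finite, along `n` pieces) concatenations of its vertices, i.e. the σ-stable hull
of the vertex set. -/
theorem extreme_points_of_L0_simplex {Ω : Type*} [MeasurableSpace Ω] (μ : Measure Ω)
    [IsProbabilityMeasure μ] (d : ℕ) (hd : 0 < d) (n : ℕ) [NeZero n]
    (x : Fin n → L0 μ d) (hx : L0AffineIndep μ d x)
    (h : L0 μ d) (hh : h ∈ ConvL0 μ d x) :
    IsL0ExtremePoint μ d (ConvL0 μ d x) h ↔
      ∃ A : Fin n → Set Ω, IsFinPartition A ∧ ∀ i, ∀ᵐ ω ∂μ, ω ∈ A i → h ω = x i ω :=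
  extreme_points_of_L0_simplex_general μ d n x hx h

end RandomBrouwer
end
end

section
/- Diameter bound for the L⁰-barycentric subdivision: Let x_1,…,x_n ∈ L⁰(𝓕,ℝ^d) be L⁰-affinely independent and S = Conv_{L⁰}{x_1,…,x_n}. For a permutation π of {1,…,n}, set y_k^π = (1/k)∑_{i=1}^k x_{π(i)} (k = 1,…,n) and S_π = Conv_{L⁰}{y_1^π,…,y_n^π}. Then for every permutation π and all u, v ∈ S_π, one has |u⁰(ω) − v⁰(ω)| ≤ ((n−1)/n) · max_{1≤i,j≤n} |x_i⁰(ω) − x_j⁰(ω)| for a.e. ω ∈ Ω. Moreover, for any L⁰-simplex G = Conv_{L⁰}{y_1,…,y_m} and any u, v ∈ G, |u⁰(ω) − v⁰(ω)| ≤ max_{1≤k,l≤m} |y_k⁰(ω) − y_l⁰(ω)| for a.e. ω (so the random diameter of G equals the a.e. maximum of pairwise vertex distances). -/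
/-!
Both bounds hold pointwise in `ω`. A point of `Conv_{L⁰}{x_i}` lies, for a.e. `ω`, in the convex
hull of the `x_i⁰(ω)`, and two points of a convex hull are no farther apart than some two of
its generators. For the barycentric simplex, every `a_i` with `i ≤ l` lies within
`l/(l+1) · M` of the centroid `y_l` of `a_0, …, a_l`, because the term `j = i` of
`∑_{j ≤ l} (a_i - a_j)` vanishes; so the closed ball of that radius about `y_l` contains the
whole convex hull of `a_0, …, a_k` for `k ≤ l`, in particular `y_k`, and `l/(l+1) ≤ (n-1)/n`.
-/

open MeasureTheory Filter Set Topology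

noncomputable section

namespace RandomBrouwer

variable {Ω : Type*} [MeasurableSpace Ω]

variable (μ : Measure Ω) (d : ℕ)

section Centroid

variable {E : Type*} [NormedAddCommGroup E] [NormedSpace ℝ E]

theorem dist_le_of_mem_convexHull {s : Set E} {r : ℝ} (hs : ∀ a ∈ s, ∀ b ∈ s, dist a b ≤ r)
    {u v : E} (hu : u ∈ convexHull ℝ s) (hv : v ∈ convexHull ℝ s) : dist u v ≤ r := by
  obtain ⟨a, ha, b, hb, hab⟩ := convexHull_exists_dist_ge2 hu hv
  exact hab.trans (hs a ha b hb)

theorem norm_sub_centroid_le {ι : Type*} {s : Finset ι} {a : ι → E} {M : ℝ}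
    (hM : ∀ i ∈ s, ∀ j ∈ s, ‖a i - a j‖ ≤ M) {i : ι} (hi : i ∈ s) :
    ‖a i - (s.card : ℝ)⁻¹ • ∑ j ∈ s, a j‖ ≤ ((s.card : ℝ) - 1) / s.card * M := by
  classical
  have hcard : (s.card : ℝ) ≠ 0 := Nat.cast_ne_zero.2 (Finset.card_ne_zero_of_mem hi)
  have hsplit : a i - (s.card : ℝ)⁻¹ • ∑ j ∈ s, a j
      = (s.card : ℝ)⁻¹ • ∑ j ∈ s.erase i, (a i - a j) := by
    rw [Finset.sum_erase s (sub_self (a i)), Finset.sum_sub_distrib, Finset.sum_const,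
      smul_sub, ← Nat.cast_smul_eq_nsmul ℝ, smul_smul, inv_mul_cancel₀ hcard, one_smul]
  have hsum : ‖∑ j ∈ s.erase i, (a i - a j)‖ ≤ ((s.card : ℝ) - 1) * M := by
    refine (norm_sum_le_of_le _ fun j hj => hM i hi j (Finset.mem_of_mem_erase hj)).trans ?_
    rw [Finset.sum_const, Finset.card_erase_of_mem hi, nsmul_eq_mul,
      Nat.cast_sub (Finset.card_pos.2 ⟨i, hi⟩), Nat.cast_one]
  rw [hsplit, norm_smul, norm_inv, Real.norm_natCast, div_eq_inv_mul, mul_assoc]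
  exact mul_le_mul_of_nonneg_left hsum (by positivity)

theorem norm_centroid_sub_centroid_le {ι : Type*} {s t : Finset ι} {a : ι → E} {M : ℝ}
    (hM : ∀ i ∈ s, ∀ j ∈ s, ‖a i - a j‖ ≤ M) (hts : t ⊆ s) (ht : t.Nonempty) :
    ‖(t.card : ℝ)⁻¹ • ∑ j ∈ t, a j - (s.card : ℝ)⁻¹ • ∑ j ∈ s, a j‖
      ≤ ((s.card : ℝ) - 1) / s.card * M := by
  rw [← dist_eq_norm, ← Metric.mem_closedBall, Finset.smul_sum (s := t)]
  refine (convex_closedBall _ _).sum_mem (fun _ _ => by positivity) ?_ fun j hj => ?_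
  · rw [Finset.sum_const, nsmul_eq_mul, mul_inv_cancel₀ (Nat.cast_ne_zero.2 ht.card_ne_zero)]
  · rw [Metric.mem_closedBall, dist_eq_norm]
    exact norm_sub_centroid_le hM (hts hj)

end Centroid

/-- The paper's `y_{k+1}`: indices start at `0` here. -/
def baryVertex {E : Type*} [AddCommMonoid E] [Module ℝ E] {n : ℕ} (a : Fin n → E) (k : Fin n) :
    E :=
  (((k : ℕ) + 1 : ℝ))⁻¹ • ∑ i ∈ Finset.univ.filter (fun i => i ≤ k), a i

theorem norm_baryVertex_sub_le {E : Type*} [NormedAddCommGroup E] [NormedSpace ℝ E] {n : ℕ}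
    {a : Fin n → E} {M : ℝ} (hM : ∀ i j, ‖a i - a j‖ ≤ M) (k l : Fin n) :
    ‖baryVertex a k - baryVertex a l‖ ≤ ((n : ℝ) - 1) / n * M := by
  wlog hkl : k ≤ l generalizing k l
  · rw [norm_sub_rev]
    exact this l k (le_of_not_ge hkl)
  have hcard (j : Fin n) : ((j : ℕ) + 1 : ℝ) = (Finset.Iic j).card := by
    rw [Fin.card_Iic, Nat.cast_succ]
  have hM0 : 0 ≤ M := (norm_nonneg _).trans (hM k k)
  have hln : ((l : ℕ) : ℝ) + 1 ≤ n := by exact_mod_cast l.isLt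
  have hratio : ((l : ℕ) + 1 - 1 : ℝ) / ((l : ℕ) + 1) ≤ ((n : ℝ) - 1) / n := by
    rw [div_le_div_iff₀ (by positivity) (by linarith)]
    nlinarith
  unfold baryVertex
  rw [hcard k, hcard l, Finset.filter_ge_eq_Iic, Finset.filter_ge_eq_Iic]
  refine (norm_centroid_sub_centroid_le (fun i _ j _ => hM i j)
    (Finset.Iic_subset_Iic.2 hkl) Finset.nonempty_Iic).trans ?_
  rw [← hcard l]
  exact mul_le_mul_of_nonneg_right hratio hM0

section AEEqFun

variable {Ω : Type*} [MeasurableSpace Ω] {μ : Measure Ω} {E : Type*} [NormedAddCommGroup E]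

theorem coeFn_finset_sum {ι : Type*} (s : Finset ι) (f : ι → Ω →ₘ[μ] E) :
    ⇑(∑ i ∈ s, f i) =ᵐ[μ] ∑ i ∈ s, ⇑(f i) := by
  classical
  induction s using Finset.induction_on with
  | empty => simpa using AEEqFun.coeFn_zero
  | insert j t hj ih =>
    simp only [Finset.sum_insert hj]
    exact (AEEqFun.coeFn_add _ _).trans ((EventuallyEq.refl _ _).add ih)

theorem ae_coeFn_baryVertex [NormedSpace ℝ E] {n : ℕ} (a : Fin n → Ω →ₘ[μ] E) :
    ∀ᵐ ω ∂μ, ∀ k, baryVertex a k ω = baryVertex (fun i => a i ω) k := by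
  rw [ae_all_iff]
  intro k
  filter_upwards [AEEqFun.coeFn_smul (((k : ℕ) + 1 : ℝ))⁻¹ (∑ i ∈ _, a i),
    coeFn_finset_sum (Finset.univ.filter (fun i => i ≤ k)) a] with ω hsmul hsum
  rw [baryVertex, hsmul, Pi.smul_apply, hsum, Finset.sum_apply, baryVertex]

end AEEqFun

section ConvL0

variable {Ω : Type*} [MeasurableSpace Ω] {μ : Measure Ω} {d : ℕ} {ι : Type*} [Fintype ι]

theorem ae_mem_convexHull_of_mem_convL0 {x : ι → L0 μ d} {z : L0 μ d} (hz : z ∈ ConvL0 μ d x) :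
    ∀ᵐ ω ∂μ, z ω ∈ convexHull ℝ (range fun i => x i ω) := by
  obtain ⟨lam, -, hlam, hsum, hz⟩ := hz
  filter_upwards [hz] with ω hω
  rw [hω]
  exact (convex_convexHull ℝ _).sum_mem (fun i _ => (hlam i ω).1) (hsum ω)
    fun i _ => subset_convexHull ℝ _ (mem_range_self i)

theorem ae_norm_sub_le_of_mem_convL0 {x : ι → L0 μ d} {M : Ω → ℝ}
    (hM : ∀ᵐ ω ∂μ, ∀ i j, ‖x i ω - x j ω‖ ≤ M ω) {u v : L0 μ d}
    (hu : u ∈ ConvL0 μ d x) (hv : v ∈ ConvL0 μ d x) :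
    ∀ᵐ ω ∂μ, ‖u ω - v ω‖ ≤ M ω := by
  filter_upwards [hM, ae_mem_convexHull_of_mem_convL0 hu, ae_mem_convexHull_of_mem_convL0 hv]
    with ω hMω huω hvω
  rw [← dist_eq_norm]
  refine dist_le_of_mem_convexHull ?_ huω hvω
  rintro _ ⟨i, rfl⟩ _ ⟨j, rfl⟩
  rw [dist_eq_norm]
  exact hMω i j

end ConvL0

theorem barycentric_subdivision_diameter_general {Ω : Type*} [MeasurableSpace Ω] (μ : Measure Ω)
    (d : ℕ) (n : ℕ) [NeZero n]
    (x : Fin n → L0 μ d) :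
    (∀ π : Equiv.Perm (Fin n),
      ∀ u ∈ ConvL0 μ d (fun k : Fin n =>
        (((k : ℕ) + 1 : ℝ))⁻¹ • ∑ i ∈ Finset.univ.filter (fun i => i ≤ k), x (π i)),
      ∀ v ∈ ConvL0 μ d (fun k : Fin n =>
        (((k : ℕ) + 1 : ℝ))⁻¹ • ∑ i ∈ Finset.univ.filter (fun i => i ≤ k), x (π i)),
      ∀ᵐ ω ∂μ, ‖u ω - v ω‖ ≤ (((n : ℝ) - 1) / n) *
        Finset.univ.sup' ⟨((0 : Fin n), (0 : Fin n)), Finset.mem_univ _⟩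
          (fun p : Fin n × Fin n => ‖x p.1 ω - x p.2 ω‖)) ∧
    (∀ (m : ℕ) [NeZero m], ∀ y : Fin m → L0 μ d, L0AffineIndep μ d y →
      ∀ u ∈ ConvL0 μ d y, ∀ v ∈ ConvL0 μ d y,
      ∀ᵐ ω ∂μ, ‖u ω - v ω‖ ≤
        Finset.univ.sup' ⟨((0 : Fin m), (0 : Fin m)), Finset.mem_univ _⟩
          (fun p : Fin m × Fin m => ‖y p.1 ω - y p.2 ω‖)) := by
  refine ⟨fun π u hu v hv => ?_, fun m _ y _ u hu v hv => ?_⟩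
  · refine ae_norm_sub_le_of_mem_convL0 (x := baryVertex (fun i => x (π i))) ?_ hu hv
    filter_upwards [ae_coeFn_baryVertex fun i => x (π i)] with ω hω k l
    rw [hω k, hω l]
    exact norm_baryVertex_sub_le (fun i j => Finset.le_sup'
      (fun p : Fin n × Fin n => ‖x p.1 ω - x p.2 ω‖) (Finset.mem_univ (π i, π j))) k l
  · exact ae_norm_sub_le_of_mem_convL0 (Eventually.of_forall fun ω i j => Finset.le_sup'
      (fun p : Fin m × Fin m => ‖y p.1 ω - y p.2 ω‖) (Finset.mem_univ (i, j))) hu hv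

/-- Diameter bound for the L⁰-barycentric subdivision, together with the
fact that on any L⁰-simplex the pointwise distance of two points is a.e. bounded by the
maximum of the pairwise vertex distances. -/
theorem barycentric_subdivision_diameter {Ω : Type*} [MeasurableSpace Ω] (μ : Measure Ω)
    [IsProbabilityMeasure μ] (d : ℕ) (hd : 0 < d) (n : ℕ) [NeZero n]
    (x : Fin n → L0 μ d) (hx : L0AffineIndep μ d x) :
    (∀ π : Equiv.Perm (Fin n),
      ∀ u ∈ ConvL0 μ d (fun k : Fin n =>
        (((k : ℕ) + 1 : ℝ))⁻¹ • ∑ i ∈ Finset.univ.filter (fun i => i ≤ k), x (π i)),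
      ∀ v ∈ ConvL0 μ d (fun k : Fin n =>
        (((k : ℕ) + 1 : ℝ))⁻¹ • ∑ i ∈ Finset.univ.filter (fun i => i ≤ k), x (π i)),
      ∀ᵐ ω ∂μ, ‖u ω - v ω‖ ≤ (((n : ℝ) - 1) / n) *
        Finset.univ.sup' ⟨((0 : Fin n), (0 : Fin n)), Finset.mem_univ _⟩
          (fun p : Fin n × Fin n => ‖x p.1 ω - x p.2 ω‖)) ∧
    (∀ (m : ℕ) [NeZero m], ∀ y : Fin m → L0 μ d, L0AffineIndep μ d y →
      ∀ u ∈ ConvL0 μ d y, ∀ v ∈ ConvL0 μ d y,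
      ∀ᵐ ω ∂μ, ‖u ω - v ω‖ ≤
        Finset.univ.sup' ⟨((0 : Fin m), (0 : Fin m)), Finset.mem_univ _⟩
          (fun p : Fin m × Fin m => ‖y p.1 ω - y p.2 ω‖)) :=
  barycentric_subdivision_diameter_general μ d n x
end RandomBrouwer
end
end

section
/- Existence of a proper L⁰-labeling function adapted to a σ-stable self-map: Let S = Conv_{L⁰}{x_1,…,x_n} be an (n−1)-dimensional L⁰-simplex in L⁰(𝓕,ℝ^d) and f : S → S a σ-stable map. For x ∈ S, let (λ_1^x,…,λ_n^x) and (μ_1^x,…,μ_n^x) be the unique L⁰-barycentric coordinates of x and f(x), i.e., x = ∑_i λ_i^x x_i and f(x) = ∑_i μ_i^x x_i. Then there exists a σ-stable map φ : S → L⁰(𝓕,{1,…,n}) such that for every x ∈ S and every i ∈ {1,…,n}: P( {ω : φ(x)⁰(ω) = i} ∩ ( {ω : (λ_i^x)⁰(ω) = 0} ∪ {ω : (λ_i^x)⁰(ω) < (μ_i^x)⁰(ω)} ) ) = 0. -/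
/-! Label `z` by the least index `i` with `0 < λᵢ` and `μᵢ ≤ λᵢ`, where `λ` and `μ` are the
L⁰-barycentric coordinates of `z` and `f z`. At each `ω` such an index exists, because two
probability vectors cannot satisfy `λᵢ < μᵢ` on the whole support of `λ`. Computed pointwise
from the coordinates, the label is measurable; since L⁰-affine independence makes the
coordinates unique on every measurable set, it is also σ-stable, and it does not depend on
which representatives of the coordinates are used. -/

open MeasureTheory Filter Set Topology

noncomputable section

namespace RandomBrouwer

variable {Ω : Type*} [MeasurableSpace Ω]

variable (μ : Measure Ω) (d : ℕ)

theorem exists_pos_le_of_sum_le {ι M : Type*} [Fintype ι] [AddCommMonoid M] [LinearOrder M]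
    [IsOrderedCancelAddMonoid M] {a b : ι → M} (ha : ∀ i, 0 ≤ a i) (hb : ∀ i, 0 ≤ b i)
    (hpos : 0 < ∑ i, a i) (hba : ∑ i, b i ≤ ∑ i, a i) : ∃ i, 0 < a i ∧ b i ≤ a i := by
  classical
  obtain ⟨j, -, hj⟩ := Finset.exists_lt_of_sum_lt (f := fun _ => (0 : M)) (g := a)
    (s := Finset.univ) (by simpa using hpos)
  have hsupp : ∑ i with 0 < a i, a i = ∑ i, a i :=
    Finset.sum_filter_of_ne fun i _ hi => (ha i).lt_of_ne' hi
  have hb_le : ∑ i with 0 < a i, b i ≤ ∑ i, b i :=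
    Finset.sum_le_sum_of_subset_of_nonneg (Finset.filter_subset _ _) fun i _ _ => hb i
  obtain ⟨i, hi, hle⟩ := Finset.exists_le_of_sum_le ⟨j, by simpa using hj⟩
    (hb_le.trans (hba.trans hsupp.ge))
  exact ⟨i, (Finset.mem_filter.1 hi).2, hle⟩

theorem sum_erase_smul_sub_eq_zero {ι R V : Type*} [Fintype ι] [DecidableEq ι] [Ring R]
    [AddCommGroup V] [Module R V] {c : ι → R} {v : ι → V} (j : ι) (hc : ∑ i, c i = 0)
    (hcv : ∑ i, c i • v i = 0) : ∑ i ∈ Finset.univ.erase j, c i • (v i - v j) = 0 := by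
  rw [Finset.sum_erase _ (by rw [sub_self, smul_zero])]
  simp only [smul_sub, Finset.sum_sub_distrib, ← Finset.sum_smul, hc, hcv, zero_smul, sub_zero]

variable {μ d}

def IsBarycentricCoords {ι : Type*} [Fintype ι] (x : ι → L0 μ d) (z : L0 μ d)
    (lam : ι → Ω → ℝ) : Prop :=
  (∀ i, Measurable (lam i)) ∧ (∀ i ω, lam i ω ∈ Icc (0:ℝ) 1) ∧ (∀ ω, ∑ i, lam i ω = 1) ∧
    ∀ᵐ ω ∂μ, z ω = ∑ i, lam i ω • x i ω

theorem IsBarycentricCoords.ae_eq_on {n : ℕ} [NeZero n] {x : Fin n → L0 μ d}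
    (hx : L0AffineIndep μ d x) {A : Set Ω} (hA : MeasurableSet A) {z z' : L0 μ d}
    {lam lam' : Fin n → Ω → ℝ} (hlam : IsBarycentricCoords x z lam)
    (hlam' : IsBarycentricCoords x z' lam') (hzz' : ∀ᵐ ω ∂μ, ω ∈ A → z ω = z' ω) :
    ∀ᵐ ω ∂μ, ω ∈ A → ∀ i, lam i ω = lam' i ω := by
  classical
  obtain ⟨hm, -, hs, hz⟩ := hlam
  obtain ⟨hm', -, hs', hz'⟩ := hlam'
  let c : Fin n → Ω → ℝ := fun i ω => lam i ω - lam' i ω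
  have hc_sum : ∀ ω, ∑ i, c i ω = 0 := fun ω => by
    simp only [c, Finset.sum_sub_distrib, hs, hs', sub_self]
  have hcx : ∀ᵐ ω ∂μ, ω ∈ A → ∑ i, c i ω • x i ω = 0 := by
    filter_upwards [hz, hz', hzz'] with ω h h' hzω hωA
    simp only [c, sub_smul, Finset.sum_sub_distrib, ← h, ← h', hzω hωA, sub_self]
  have hξ := hx (fun i => A.indicator (c i)) (fun i => ((hm i).sub (hm' i)).indicator hA) (by
    filter_upwards [hcx] with ω hω
    by_cases hωA : ω ∈ A
    · simp only [indicator_of_mem hωA]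
      exact sum_erase_smul_sub_eq_zero 0 (hc_sum ω) (hω hωA)
    · simp only [indicator_of_notMem hωA, zero_smul, Finset.sum_const_zero])
  have hξ_all : ∀ᵐ ω ∂μ, ∀ i, i ≠ 0 → A.indicator (c i) ω = 0 := by
    refine ae_all_iff.2 fun i => ?_
    by_cases hi : i = 0
    · exact Eventually.of_forall fun _ h => absurd hi h
    · filter_upwards [hξ i hi] with ω h _ using h
  filter_upwards [hξ_all] with ω hω hωA
  have hc_ne : ∀ i, i ≠ 0 → c i ω = 0 := fun i hi => by
    simpa only [indicator_of_mem hωA] using hω i hi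
  have hc0 : c 0 ω = 0 := by rw [← Fintype.sum_eq_single 0 hc_ne, hc_sum]
  intro i
  refine sub_eq_zero.1 ?_
  by_cases hi : i = 0
  · exact hi ▸ hc0
  · exact hc_ne i hi

open Classical in
def baryCoords {ι : Type*} [Fintype ι] (x : ι → L0 μ d) (z : L0 μ d) : ι → Ω → ℝ :=
  if hz : z ∈ ConvL0 μ d x then hz.choose else 0

theorem measurable_baryCoords {ι : Type*} [Fintype ι] (x : ι → L0 μ d) (z : L0 μ d) (i : ι) :
    Measurable (baryCoords x z i) := by
  unfold baryCoords
  split_ifs with hz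
  · exact hz.choose_spec.1 i
  · exact measurable_const

theorem isBarycentricCoords_baryCoords {ι : Type*} [Fintype ι] {x : ι → L0 μ d} {z : L0 μ d}
    (hz : z ∈ ConvL0 μ d x) : IsBarycentricCoords x z (baryCoords x z) := by
  rw [baryCoords, dif_pos hz]
  exact hz.choose_spec

/- `n` is a fallback that keeps the search total; it is never returned when some index is good
(`leastGoodIndex_lt`). -/
open Classical in
def leastGoodIndex {n : ℕ} (a b : Fin n → ℝ) : ℕ :=
  Nat.find (p := fun m => m = n ∨ ∃ i : Fin n, (i : ℕ) = m ∧ 0 < a i ∧ b i ≤ a i)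
    ⟨n, Or.inl rfl⟩

theorem leastGoodIndex_lt {n : ℕ} {a b : Fin n → ℝ} {i : Fin n} (hi : 0 < a i ∧ b i ≤ a i) :
    leastGoodIndex a b < n :=
  (Nat.find_le (Or.inr ⟨i, rfl, hi⟩)).trans_lt i.isLt

open Classical in
theorem pos_and_le_of_leastGoodIndex_eq {n : ℕ} {a b : Fin n → ℝ} {i : Fin n}
    (h : leastGoodIndex a b = i) : 0 < a i ∧ b i ≤ a i := by
  have hspec := Nat.find_spec
    (⟨n, Or.inl rfl⟩ : ∃ m, m = n ∨ ∃ i : Fin n, (i : ℕ) = m ∧ 0 < a i ∧ b i ≤ a i)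
  rw [← leastGoodIndex, h] at hspec
  rcases hspec with hn | ⟨j, hj, hgood⟩
  · exact absurd hn i.isLt.ne
  · exact Fin.ext hj ▸ hgood

theorem measurable_leastGoodIndex {n : ℕ} {lam mu : Fin n → Ω → ℝ}
    (hlam : ∀ i, Measurable (lam i)) (hmu : ∀ i, Measurable (mu i)) :
    Measurable fun ω => leastGoodIndex (lam · ω) (mu · ω) := by
  classical
  refine measurable_find _ fun m => ?_
  simp only [ofPred_or, ofPred_exists, ofPred_and]
  exact (MeasurableSet.const _).union <| MeasurableSet.iUnion fun i =>
    (MeasurableSet.const _).inter <|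
      (measurableSet_lt measurable_const (hlam i)).inter (measurableSet_le (hmu i) (hlam i))

variable {n : ℕ} (x : Fin n → L0 μ d) (f : L0 μ d → L0 μ d)

def adaptedLabel (z : L0 μ d) : Ω →ₘ[μ] ℕ :=
  AEEqFun.mk (fun ω => leastGoodIndex (baryCoords x z · ω) (baryCoords x (f z) · ω) + 1)
    ((measurable_leastGoodIndex (measurable_baryCoords x z)
      (measurable_baryCoords x (f z))).add_const 1).aestronglyMeasurable

theorem coeFn_adaptedLabel (z : L0 μ d) :
    adaptedLabel x f z =ᵐ[μ]
      fun ω => leastGoodIndex (baryCoords x z · ω) (baryCoords x (f z) · ω) + 1 :=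
  AEEqFun.coeFn_mk _ _

variable {x f}

theorem adaptedLabel_ae_mem_Icc [NeZero n] {z : L0 μ d} (hz : z ∈ ConvL0 μ d x)
    (hfz : f z ∈ ConvL0 μ d x) :
    ∀ᵐ ω ∂μ, 1 ≤ adaptedLabel x f z ω ∧ adaptedLabel x f z ω ≤ n := by
  obtain ⟨-, hlam, hlam_sum, -⟩ := isBarycentricCoords_baryCoords hz
  obtain ⟨-, hmu, hmu_sum, -⟩ := isBarycentricCoords_baryCoords hfz
  filter_upwards [coeFn_adaptedLabel x f z] with ω hω
  obtain ⟨i, hi⟩ := exists_pos_le_of_sum_le (fun i => (hlam i ω).1) (fun i => (hmu i ω).1)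
    (by rw [hlam_sum]; exact one_pos) (by rw [hlam_sum, hmu_sum])
  rw [hω]
  exact ⟨Nat.le_add_left 1 _, leastGoodIndex_lt hi⟩

theorem adaptedLabel_ae_eq_on [NeZero n] (hx : L0AffineIndep μ d x) {A : Set Ω}
    (hA : MeasurableSet A) {z z' : L0 μ d} (hz : z ∈ ConvL0 μ d x) (hz' : z' ∈ ConvL0 μ d x)
    (hfz : f z ∈ ConvL0 μ d x) (hfz' : f z' ∈ ConvL0 μ d x)
    (hzz' : ∀ᵐ ω ∂μ, ω ∈ A → z ω = z' ω) (hfzz' : ∀ᵐ ω ∂μ, ω ∈ A → f z ω = f z' ω) :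
    ∀ᵐ ω ∂μ, ω ∈ A → adaptedLabel x f z ω = adaptedLabel x f z' ω := by
  filter_upwards [coeFn_adaptedLabel x f z, coeFn_adaptedLabel x f z',
    (isBarycentricCoords_baryCoords hz).ae_eq_on hx hA (isBarycentricCoords_baryCoords hz') hzz',
    (isBarycentricCoords_baryCoords hfz).ae_eq_on hx hA (isBarycentricCoords_baryCoords hfz')
      hfzz'] with ω hω hω' hlam hmu hωA
  rw [hω, hω', funext (hlam hωA), funext (hmu hωA)]

theorem sigmaStableMapOn_adaptedLabel [NeZero n] (hx : L0AffineIndep μ d x)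
    (hmaps : MapsTo f (ConvL0 μ d x) (ConvL0 μ d x)) (hf : SigmaStableMapOn μ d (ConvL0 μ d x) f) :
    SigmaStableMapOn μ d (ConvL0 μ d x) (adaptedLabel x f) :=
  fun A hA v hv z hz hzv k => adaptedLabel_ae_eq_on hx (hA.1 k) hz (hv k) (hmaps hz)
    (hmaps (hv k)) (hzv k) (hf A hA v hv z hz hzv k)

theorem ae_pos_and_le_of_adaptedLabel_eq [NeZero n] (hx : L0AffineIndep μ d x) {z : L0 μ d}
    (hz : z ∈ ConvL0 μ d x) (hfz : f z ∈ ConvL0 μ d x) {lam mu : Fin n → Ω → ℝ}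
    (hlam : IsBarycentricCoords x z lam) (hmu : IsBarycentricCoords x (f z) mu) (i : Fin n) :
    ∀ᵐ ω ∂μ, adaptedLabel x f z ω = (i : ℕ) + 1 → 0 < lam i ω ∧ mu i ω ≤ lam i ω := by
  filter_upwards [coeFn_adaptedLabel x f z,
    (isBarycentricCoords_baryCoords hz).ae_eq_on hx MeasurableSet.univ hlam
      (Eventually.of_forall fun _ _ => rfl),
    (isBarycentricCoords_baryCoords hfz).ae_eq_on hx MeasurableSet.univ hmu
      (Eventually.of_forall fun _ _ => rfl)] with ω hω hlam_eq hmu_eq hi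
  rw [hω, Nat.add_right_cancel_iff] at hi
  rw [← hlam_eq (mem_univ ω), ← hmu_eq (mem_univ ω)]
  exact pos_and_le_of_leastGoodIndex_eq hi

theorem exists_adapted_proper_L0_labeling_general {Ω : Type*} [MeasurableSpace Ω] (μ : Measure Ω)
    (d : ℕ) (n : ℕ) [NeZero n]
    (x : Fin n → L0 μ d) (hx : L0AffineIndep μ d x)
    (f : L0 μ d → L0 μ d) (hmaps : Set.MapsTo f (ConvL0 μ d x) (ConvL0 μ d x))
    (hstabf : SigmaStableMapOn μ d (ConvL0 μ d x) f) :
    ∃ φ : L0 μ d → (Ω →ₘ[μ] ℕ),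
      SigmaStableMapOn μ d (ConvL0 μ d x) φ ∧
      (∀ y ∈ ConvL0 μ d x, ∀ᵐ ω ∂μ, 1 ≤ φ y ω ∧ φ y ω ≤ n) ∧
      ∀ z ∈ ConvL0 μ d x,
        ∀ lam : Fin n → Ω → ℝ, (∀ i, Measurable (lam i)) →
          (∀ i ω, lam i ω ∈ Icc (0:ℝ) 1) → (∀ ω, ∑ i, lam i ω = 1) →
          (∀ᵐ ω ∂μ, z ω = ∑ i, lam i ω • x i ω) →
        ∀ mu : Fin n → Ω → ℝ, (∀ i, Measurable (mu i)) →
          (∀ i ω, mu i ω ∈ Icc (0:ℝ) 1) → (∀ ω, ∑ i, mu i ω = 1) →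
          (∀ᵐ ω ∂μ, f z ω = ∑ i, mu i ω • x i ω) →
        ∀ i : Fin n, ∀ᵐ ω ∂μ,
          ¬(φ z ω = (i : ℕ) + 1 ∧ (lam i ω = 0 ∨ lam i ω < mu i ω)) := by
  refine ⟨adaptedLabel x f, sigmaStableMapOn_adaptedLabel hx hmaps hstabf,
    fun y hy => adaptedLabel_ae_mem_Icc hy (hmaps hy), ?_⟩
  intro z hz lam hlm hlI hls hlr mu hmm hmI hms hmr i
  filter_upwards [ae_pos_and_le_of_adaptedLabel_eq hx hz (hmaps hz) ⟨hlm, hlI, hls, hlr⟩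
    ⟨hmm, hmI, hms, hmr⟩ i] with ω hgood
  rintro ⟨hφ, hbad⟩
  obtain ⟨hpos, hle⟩ := hgood hφ
  rcases hbad with hzero | hlt <;> linarith

/-- Existence of a proper L⁰-labeling function adapted to a σ-stable
self-map of an L⁰-simplex. -/
theorem exists_adapted_proper_L0_labeling {Ω : Type*} [MeasurableSpace Ω] (μ : Measure Ω)
    [IsProbabilityMeasure μ] (d : ℕ) (hd : 0 < d) (n : ℕ) [NeZero n]
    (x : Fin n → L0 μ d) (hx : L0AffineIndep μ d x)
    (f : L0 μ d → L0 μ d) (hmaps : Set.MapsTo f (ConvL0 μ d x) (ConvL0 μ d x))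
    (hstabf : SigmaStableMapOn μ d (ConvL0 μ d x) f) :
    ∃ φ : L0 μ d → (Ω →ₘ[μ] ℕ),
      SigmaStableMapOn μ d (ConvL0 μ d x) φ ∧
      (∀ y ∈ ConvL0 μ d x, ∀ᵐ ω ∂μ, 1 ≤ φ y ω ∧ φ y ω ≤ n) ∧
      ∀ z ∈ ConvL0 μ d x,
        ∀ lam : Fin n → Ω → ℝ, (∀ i, Measurable (lam i)) →
          (∀ i ω, lam i ω ∈ Icc (0:ℝ) 1) → (∀ ω, ∑ i, lam i ω = 1) →
          (∀ᵐ ω ∂μ, z ω = ∑ i, lam i ω • x i ω) →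
        ∀ mu : Fin n → Ω → ℝ, (∀ i, Measurable (mu i)) →
          (∀ i ω, mu i ω ∈ Icc (0:ℝ) 1) → (∀ ω, ∑ i, mu i ω = 1) →
          (∀ᵐ ω ∂μ, f z ω = ∑ i, mu i ω • x i ω) →
        ∀ i : Fin n, ∀ᵐ ω ∂μ,
          ¬(φ z ω = (i : ℕ) + 1 ∧ (lam i ω = 0 ∨ lam i ω < mu i ω)) :=
  exists_adapted_proper_L0_labeling_general μ d n x hx f hmaps hstabf
end RandomBrouwer
end
end

section
/- Random projection onto a closed L⁰-convex set in L⁰(𝓕,ℝ^d): Let G be a nonempty, 𝒯_{ε,λ}-closed, L⁰-convex subset of L⁰(𝓕,ℝ^d). Then for every x ∈ L⁰(𝓕,ℝ^d) there exists a unique P_G(x) ∈ G such that |x⁰(ω) − (P_G(x))⁰(ω)| ≤ |x⁰(ω) − g⁰(ω)| for a.e. ω, for every g ∈ G (i.e., P_G(x) attains the essential infimum of the random distances from x to G). Moreover, the resulting map P_G : L⁰(𝓕,ℝ^d) → G is nonexpansive: |(P_G(x))⁰(ω) − (P_G(y))⁰(ω)| ≤ |x⁰(ω) − y⁰(ω)|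 for a.e. ω, for all x, y ∈ L⁰(𝓕,ℝ^d). -/
open MeasureTheory Filter Set Topology

noncomputable section

namespace RandomBrouwer

variable {Ω : Type*} [MeasurableSpace Ω]

variable (μ : Measure Ω) (d : ℕ)

/-!
Minimising `g ↦ ∫ arctan ‖x - g‖` over `G`, and pasting the elements of a minimising sequence
pointwise (pasting along a measurable set is an L⁰-convex combination with an indicator
coefficient), gives `mₙ ∈ G` with `‖x - mₙ‖` decreasing a.e. to some `η`. This `η` lies a.e.
below `‖x - g‖` for every `g ∈ G`: pasting `g` onto the set where it beats `η` would lower the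
integral, since `arctan` is strictly increasing. Midpoints of `mₙ` and `mⱼ` lie in `G`, so
Apollonius's identity makes `(mₙ ω)` Cauchy; its limit lies in `G` by closedness and realises `η`.
Uniqueness and nonexpansiveness then follow pointwise, as for Hilbert space projections, from the
variational inequality `⟪x - P x, g - P x⟫ ≤ 0`, got by comparing `P x` with `(1 - t) P x + t g`
as `t → 0`.
-/

open scoped InnerProductSpace
open Real

section InnerProduct
variable {E : Type*} [NormedAddCommGroup E] [InnerProductSpace ℝ E]

lemma real_inner_nonpos_of_forall_norm_le_norm_sub_smul {a b : E} {t : ℕ → ℝ}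
    (ht0 : ∀ n, 0 < t n) (ht : Tendsto t atTop (𝓝 0)) (h : ∀ n, ‖a‖ ≤ ‖a - t n • b‖) :
    ⟪a, b⟫_ℝ ≤ 0 := by
  have hle : ∀ n, ⟪a, b⟫_ℝ ≤ t n / 2 * ‖b‖ ^ 2 := fun n => by
    have hsq : ‖a - t n • b‖ ^ 2 = ‖a‖ ^ 2 - 2 * (t n * ⟪a, b⟫_ℝ) + t n ^ 2 * ‖b‖ ^ 2 := by
      rw [norm_sub_sq_real, real_inner_smul_right, norm_smul, Real.norm_of_nonneg (ht0 n).le]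
      ring
    nlinarith [pow_le_pow_left₀ (norm_nonneg a) (h n) 2, ht0 n]
  have hlim : Tendsto (fun n => t n / 2 * ‖b‖ ^ 2) atTop (𝓝 0) := by
    simpa using (ht.div_const 2).mul_const (‖b‖ ^ 2)
  exact ge_of_tendsto' hlim hle

lemma norm_sub_le_of_real_inner_nonpos {x y p q : E} (hp : ⟪x - p, q - p⟫_ℝ ≤ 0)
    (hq : ⟪y - q, p - q⟫_ℝ ≤ 0) : ‖p - q‖ ≤ ‖x - y‖ := by
  have hsq : ‖p - q‖ ^ 2 ≤ ‖x - y‖ * ‖p - q‖ := calc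
    ‖p - q‖ ^ 2 ≤ ‖p - q‖ ^ 2 - ⟪x - p, q - p⟫_ℝ - ⟪y - q, p - q⟫_ℝ := by linarith
    _ = ⟪x - y, p - q⟫_ℝ := by
      simp only [inner_sub_left, inner_sub_right, real_inner_self_eq_norm_sq, norm_sub_sq_real]
      linarith [real_inner_comm p q]
    _ ≤ ‖x - y‖ * ‖p - q‖ := real_inner_le_norm _ _
  rcases (norm_nonneg (p - q)).eq_or_lt with h0 | hpos
  · rw [← h0]; exact norm_nonneg _
  · nlinarith

lemma cauchySeq_of_tendsto_norm_sub_of_le_norm_sub_midpoint {x : E} {a : ℕ → E} {η : ℝ}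
    (hη : Tendsto (fun n => ‖x - a n‖) atTop (𝓝 η))
    (hmid : ∀ n j, η ≤ ‖x - midpoint ℝ (a n) (a j)‖) : CauchySeq a := by
  have hη0 : 0 ≤ η := ge_of_tendsto' hη fun n => norm_nonneg _
  set F : ℕ × ℕ → ℝ := fun p => 2 * ‖x - a p.1‖ ^ 2 + 2 * ‖x - a p.2‖ ^ 2 - 4 * η ^ 2
  have hF : Tendsto F atTop (𝓝 0) := by
    rw [← prod_atTop_atTop_eq]
    have h1 := ((hη.comp (tendsto_fst (g := (atTop : Filter ℕ)))).pow 2).const_mul 2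
    have h2 := ((hη.comp (tendsto_snd (f := (atTop : Filter ℕ)))).pow 2).const_mul 2
    have h := (h1.add h2).sub_const (4 * η ^ 2)
    rwa [show 2 * η ^ 2 + 2 * η ^ 2 - 4 * η ^ 2 = 0 by ring] at h
  have hdist : ∀ p : ℕ × ℕ, dist (a p.1) (a p.2) ≤ √(F p) := fun p => by
    have hA := EuclideanGeometry.dist_sq_add_dist_sq_eq_two_mul_dist_midpoint_sq_add_half_dist_sq
      x (a p.1) (a p.2)
    simp only [dist_eq_norm] at hA ⊢
    refine Real.le_sqrt_of_sq_le ?_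
    nlinarith [pow_le_pow_left₀ hη0 (hmid p.1 p.2) 2]
  rw [cauchySeq_iff_tendsto_dist_atTop_0]
  refine squeeze_zero (fun _ => dist_nonneg) hdist ?_
  simpa using hF.sqrt
end InnerProduct

lemma exists_ae_tendsto_of_ae_exists_tendsto {Ω E : Type*} [MeasurableSpace Ω] {μ : Measure Ω}
    [TopologicalSpace E] [TopologicalSpace.PseudoMetrizableSpace E] {f : ℕ → Ω →ₘ[μ] E}
    (hf : ∀ᵐ ω ∂μ, ∃ l, Tendsto (fun n => f n ω) atTop (𝓝 l)) :
    ∃ p : Ω →ₘ[μ] E, ∀ᵐ ω ∂μ, Tendsto (fun n => f n ω) atTop (𝓝 (p ω)) := by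
  obtain ⟨p, hp, hlim⟩ :=
    exists_stronglyMeasurable_limit_of_tendsto_ae (fun n => (f n).aestronglyMeasurable) hf
  refine ⟨AEEqFun.mk p hp.aestronglyMeasurable, ?_⟩
  filter_upwards [hlim, AEEqFun.coeFn_mk p hp.aestronglyMeasurable] with ω hω hpω
  rwa [hpω]

lemma norm_arctan_le (t : ℝ) : ‖arctan t‖ ≤ π / 2 :=
  abs_le.2 ⟨(neg_pi_div_two_lt_arctan t).le, (arctan_lt_pi_div_two t).le⟩

section IntegralArctan

variable {Ω : Type*} [MeasurableSpace Ω] {μ : Measure Ω} [IsFiniteMeasure μ]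

lemma integrable_arctan_comp {f : Ω → ℝ} (hf : AEStronglyMeasurable f μ) :
    Integrable (fun ω => arctan (f ω)) μ :=
  .of_bound (continuous_arctan.comp_aestronglyMeasurable hf) (π / 2)
    (ae_of_all _ fun _ => norm_arctan_le _)

lemma tendsto_integral_arctan_comp {f : ℕ → Ω → ℝ} {g : Ω → ℝ}
    (hf : ∀ n, AEStronglyMeasurable (f n) μ)
    (hfg : ∀ᵐ ω ∂μ, Tendsto (fun n => f n ω) atTop (𝓝 (g ω))) :
    Tendsto (fun n => ∫ ω, arctan (f n ω) ∂μ) atTop (𝓝 (∫ ω, arctan (g ω) ∂μ)) :=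
  tendsto_integral_of_dominated_convergence (fun _ => π / 2)
    (fun n => continuous_arctan.comp_aestronglyMeasurable (hf n)) (integrable_const _)
    (fun _ => ae_of_all _ fun _ => norm_arctan_le _)
    (hfg.mono fun _ h => (continuous_arctan.tendsto _).comp h)

end IntegralArctan

section L0

variable {Ω : Type*} [MeasurableSpace Ω] {μ : Measure Ω} {d : ℕ} {G : Set (L0 μ d)}

lemma coeFn_sub_smul_add_smul (u v : L0 μ d) (t : ℝ) :
    ⇑((1 - t) • u + t • v) =ᵐ[μ] fun ω => (1 - t) • u ω + t • v ω := by
  filter_upwards [AEEqFun.coeFn_add ((1 - t) • u) (t • v), AEEqFun.coeFn_smul (1 - t) u,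
    AEEqFun.coeFn_smul t v] with ω h h1 h2
  rw [h, Pi.add_apply, h1, h2]
  rfl

lemma L0Convex.sub_smul_add_smul_mem (hG : L0Convex μ d G) {u v : L0 μ d} (hu : u ∈ G)
    (hv : v ∈ G) {t : ℝ} (ht : t ∈ Icc (0 : ℝ) 1) : (1 - t) • u + t • v ∈ G :=
  hG u hu v hv (fun _ => 1 - t) measurable_const
    (fun _ => ⟨sub_nonneg.2 ht.2, sub_le_self _ ht.1⟩) _
    ((coeFn_sub_smul_add_smul u v t).mono fun ω h => by rw [h, sub_sub_cancel])

lemma measurable_norm_sub (x u : L0 μ d) : Measurable fun ω => ‖x ω - u ω‖ :=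
  (x.measurable.sub u.measurable).norm

lemma measurableSet_norm_sub_le_norm_sub (x u v : L0 μ d) :
    MeasurableSet {ω | ‖x ω - u ω‖ ≤ ‖x ω - v ω‖} :=
  measurableSet_le (measurable_norm_sub x u) (measurable_norm_sub x v)

def nearer (x u v : L0 μ d) : L0 μ d :=
  AEEqFun.mk ({ω | ‖x ω - u ω‖ ≤ ‖x ω - v ω‖}.piecewise u v) <|
    (u.stronglyMeasurable.piecewise (measurableSet_norm_sub_le_norm_sub x u v)
      v.stronglyMeasurable).aestronglyMeasurable

lemma coeFn_nearer (x u v : L0 μ d) :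
    nearer x u v =ᵐ[μ] {ω | ‖x ω - u ω‖ ≤ ‖x ω - v ω‖}.piecewise u v :=
  AEEqFun.coeFn_mk _ _

lemma norm_sub_nearer (x u v : L0 μ d) :
    ∀ᵐ ω ∂μ, ‖x ω - nearer x u v ω‖ = min ‖x ω - u ω‖ ‖x ω - v ω‖ := by
  filter_upwards [coeFn_nearer x u v] with ω hω
  by_cases h : ‖x ω - u ω‖ ≤ ‖x ω - v ω‖
  · simp [hω, h]
  · simp [hω, h, (not_le.1 h).le]

lemma L0Convex.nearer_mem (hG : L0Convex μ d G) (x : L0 μ d) {u v : L0 μ d} (hu : u ∈ G)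
    (hv : v ∈ G) : nearer x u v ∈ G := by
  refine hG u hu v hv ({ω | ‖x ω - u ω‖ ≤ ‖x ω - v ω‖}.indicator 1)
    (measurable_one.indicator (measurableSet_norm_sub_le_norm_sub x u v)) (fun ω => ?_) _ ?_
  · by_cases h : ‖x ω - u ω‖ ≤ ‖x ω - v ω‖ <;> simp [h]
  · filter_upwards [coeFn_nearer x u v] with ω hω
    by_cases h : ‖x ω - u ω‖ ≤ ‖x ω - v ω‖ <;> simp [hω, h]

def nearestSeq (x : L0 μ d) (g : ℕ → L0 μ d) : ℕ → L0 μ d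
  | 0 => g 0
  | n + 1 => nearer x (nearestSeq x g n) (g (n + 1))

lemma L0Convex.nearestSeq_mem (hG : L0Convex μ d G) (x : L0 μ d) {g : ℕ → L0 μ d}
    (hg : ∀ n, g n ∈ G) (n : ℕ) : nearestSeq x g n ∈ G := by
  induction n with
  | zero => exact hg 0
  | succ n ih => exact hG.nearer_mem x ih (hg (n + 1))

lemma ae_antitone_norm_sub_nearestSeq (x : L0 μ d) (g : ℕ → L0 μ d) :
    ∀ᵐ ω ∂μ, Antitone (fun n => ‖x ω - nearestSeq x g n ω‖) ∧
      ∀ n, ‖x ω - nearestSeq x g n ω‖ ≤ ‖x ω - g n ω‖ := by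
  filter_upwards [ae_all_iff.2 fun n => norm_sub_nearer x (nearestSeq x g n) (g (n + 1))]
    with ω hω
  refine ⟨antitone_nat_of_succ_le fun n => (hω n).trans_le (min_le_left _ _), fun n => ?_⟩
  cases n with
  | zero => exact le_rfl
  | succ n => exact (hω n).trans_le (min_le_right _ _)

def IsNearestPoint (G : Set (L0 μ d)) (x p : L0 μ d) : Prop :=
  p ∈ G ∧ ∀ g ∈ G, ∀ᵐ ω ∂μ, ‖x ω - p ω‖ ≤ ‖x ω - g ω‖

section FiniteMeasure

variable [IsFiniteMeasure μ]

lemma exists_seq_tendsto_of_integral_arctan_le (hne : G.Nonempty) (hG : L0Convex μ d G)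
    (x : L0 μ d) : ∃ (m : ℕ → L0 μ d) (η : Ω → ℝ), (∀ n, m n ∈ G) ∧
      (∀ᵐ ω ∂μ, Tendsto (fun n => ‖x ω - m n ω‖) atTop (𝓝 (η ω))) ∧
      ∀ g ∈ G, ∫ ω, arctan (η ω) ∂μ ≤ ∫ ω, arctan ‖x ω - g ω‖ ∂μ := by
  set Φ : L0 μ d → ℝ := fun g => ∫ ω, arctan ‖x ω - g ω‖ ∂μ
  have hΦ : BddBelow (Φ '' G) := ⟨0, forall_mem_image.2 fun _ _ =>
    integral_nonneg fun _ => arctan_nonneg.2 (norm_nonneg _)⟩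
  have hmin : ∀ n : ℕ, ∃ g ∈ G, Φ g < sInf (Φ '' G) + 1 / (n + 1) := fun n => by
    obtain ⟨_, ⟨g, hg, rfl⟩, hlt⟩ :=
      exists_lt_of_csInf_lt (hne.image Φ) (lt_add_of_pos_right _ Nat.one_div_pos_of_nat)
    exact ⟨g, hg, hlt⟩
  choose g hgG hgΦ using hmin
  have hdist := ae_antitone_norm_sub_nearestSeq x g
  have hη : ∀ᵐ ω ∂μ, Tendsto (fun n => ‖x ω - nearestSeq x g n ω‖) atTop
      (𝓝 (⨅ n, ‖x ω - nearestSeq x g n ω‖)) :=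
    hdist.mono fun ω hω => tendsto_atTop_ciInf hω.1 ⟨0, forall_mem_range.2 fun _ => norm_nonneg _⟩
  refine ⟨nearestSeq x g, _, hG.nearestSeq_mem x hgG, hη, fun q hq => ?_⟩
  have hle : ∀ n : ℕ, Φ (nearestSeq x g n) ≤ sInf (Φ '' G) + 1 / (n + 1) := fun n =>
    (integral_mono_ae (integrable_arctan_comp (measurable_norm_sub _ _).aestronglyMeasurable)
      (integrable_arctan_comp (measurable_norm_sub _ _).aestronglyMeasurable)
      (hdist.mono fun _ hω => arctan_strictMono.monotone (hω.2 n))).trans (hgΦ n).le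
  have hbound : Tendsto (fun n : ℕ => sInf (Φ '' G) + 1 / ((n : ℝ) + 1)) atTop
      (𝓝 (sInf (Φ '' G))) := by
    simpa using (tendsto_const_nhds (x := sInf (Φ '' G))).add
      tendsto_one_div_add_atTop_nhds_zero_nat
  calc ∫ ω, arctan (⨅ n, ‖x ω - nearestSeq x g n ω‖) ∂μ ≤ sInf (Φ '' G) :=
        le_of_tendsto_of_tendsto' (tendsto_integral_arctan_comp
          (fun n => (measurable_norm_sub _ _).aestronglyMeasurable) hη)
          hbound hle
    _ ≤ Φ q := csInf_le hΦ (mem_image_of_mem Φ hq)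

lemma ae_le_norm_sub_of_integral_arctan_le (hG : L0Convex μ d G) {x : L0 μ d}
    {m : ℕ → L0 μ d} {η : Ω → ℝ} (hm : ∀ n, m n ∈ G)
    (hη : ∀ᵐ ω ∂μ, Tendsto (fun n => ‖x ω - m n ω‖) atTop (𝓝 (η ω)))
    (hηG : ∀ g ∈ G, ∫ ω, arctan (η ω) ∂μ ≤ ∫ ω, arctan ‖x ω - g ω‖ ∂μ) {q : L0 μ d}
    (hq : q ∈ G) : ∀ᵐ ω ∂μ, η ω ≤ ‖x ω - q ω‖ := by
  set ζ : Ω → ℝ := fun ω => min ‖x ω - q ω‖ (η ω)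
  have hζ : ∀ᵐ ω ∂μ, Tendsto (fun n => ‖x ω - nearer x q (m n) ω‖) atTop (𝓝 (ζ ω)) := by
    filter_upwards [hη, ae_all_iff.2 fun n => norm_sub_nearer x q (m n)] with ω hω hn
    simp_rw [hn]
    exact tendsto_const_nhds.min hω
  have hζm : AEStronglyMeasurable ζ μ := aestronglyMeasurable_of_tendsto_ae _
    (fun n => (measurable_norm_sub _ _).aestronglyMeasurable) hζ
  have hηm : AEStronglyMeasurable η μ := aestronglyMeasurable_of_tendsto_ae _
    (fun n => (measurable_norm_sub _ _).aestronglyMeasurable) hη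
  have hζη : ∀ ω, arctan (ζ ω) ≤ arctan (η ω) :=
    fun ω => arctan_strictMono.monotone (min_le_right _ _)
  have hle : ∫ ω, arctan (η ω) ∂μ ≤ ∫ ω, arctan (ζ ω) ∂μ :=
    ge_of_tendsto' (tendsto_integral_arctan_comp
      (fun n => (measurable_norm_sub _ _).aestronglyMeasurable) hζ)
      fun n => hηG _ (hG.nearer_mem x hq (hm n))
  have hae : (fun ω => arctan (ζ ω)) =ᵐ[μ] fun ω => arctan (η ω) :=
    (integral_eq_iff_of_ae_le (integrable_arctan_comp hζm) (integrable_arctan_comp hηm)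
      (ae_of_all _ hζη)).1 (le_antisymm (integral_mono (integrable_arctan_comp hζm)
        (integrable_arctan_comp hηm) hζη) hle)
  filter_upwards [hae] with ω hω
  exact min_eq_right_iff.1 (arctan_strictMono.injective hω)

lemma exists_isNearestPoint_of_tendsto (hcl : TelClosed μ d G) (hG : L0Convex μ d G)
    {x : L0 μ d} {m : ℕ → L0 μ d} {η : Ω → ℝ} (hm : ∀ n, m n ∈ G)
    (hη : ∀ᵐ ω ∂μ, Tendsto (fun n => ‖x ω - m n ω‖) atTop (𝓝 (η ω)))
    (hηG : ∀ g ∈ G, ∀ᵐ ω ∂μ, η ω ≤ ‖x ω - g ω‖) : ∃ p, IsNearestPoint G x p := by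
  have hmid : ∀ᵐ ω ∂μ, ∀ n j, η ω ≤ ‖x ω - midpoint ℝ (m n ω) (m j ω)‖ := by
    refine ae_all_iff.2 fun n => ae_all_iff.2 fun j => ?_
    filter_upwards [hηG _ (hG.sub_smul_add_smul_mem (hm n) (hm j) (t := ⅟2) (by norm_num)),
      coeFn_sub_smul_add_smul (m n) (m j) ⅟2] with ω hω hmid
    rwa [hmid, ← AffineMap.lineMap_apply_module, ← midpoint] at hω
  obtain ⟨p, hp⟩ := exists_ae_tendsto_of_ae_exists_tendsto ((hη.and hmid).mono fun ω hω =>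
    cauchySeq_tendsto_of_complete (cauchySeq_of_tendsto_norm_sub_of_le_norm_sub_midpoint hω.1 hω.2))
  have hpG : p ∈ G :=
    hcl m hm p (tendstoInMeasure_of_tendsto_ae (fun n => (m n).aestronglyMeasurable) hp)
  refine ⟨p, hpG, fun g hg => ?_⟩
  filter_upwards [hp, hη, hηG g hg] with ω hpω hηω hle
  have hxp : Tendsto (fun n => ‖x ω - m n ω‖) atTop (𝓝 ‖x ω - p ω‖) :=
    ((continuous_const.sub continuous_id).norm.tendsto _).comp hpω
  exact (tendsto_nhds_unique hxp hηω).trans_le hle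

theorem exists_isNearestPoint (hne : G.Nonempty) (hcl : TelClosed μ d G) (hG : L0Convex μ d G)
    (x : L0 μ d) : ∃ p, IsNearestPoint G x p := by
  obtain ⟨m, η, hm, hη, hηG⟩ := exists_seq_tendsto_of_integral_arctan_le hne hG x
  exact exists_isNearestPoint_of_tendsto hcl hG hm hη fun q hq =>
    ae_le_norm_sub_of_integral_arctan_le hG hm hη hηG hq

end FiniteMeasure

lemma IsNearestPoint.ae_inner_nonpos (hG : L0Convex μ d G) {x p q : L0 μ d}
    (hp : IsNearestPoint G x p) (hq : q ∈ G) : ∀ᵐ ω ∂μ, ⟪x ω - p ω, q ω - p ω⟫_ℝ ≤ 0 := by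
  have ht : ∀ n : ℕ, 1 / ((n : ℝ) + 1) ∈ Icc (0 : ℝ) 1 := fun n =>
    ⟨Nat.one_div_pos_of_nat.le, div_le_one_of_le₀ (by simp) (by positivity)⟩
  filter_upwards [ae_all_iff.2 fun n => hp.2 _ (hG.sub_smul_add_smul_mem hp.1 hq (ht n)),
    ae_all_iff.2 fun n : ℕ => coeFn_sub_smul_add_smul p q (1 / ((n : ℝ) + 1))] with ω hle hz
  refine real_inner_nonpos_of_forall_norm_le_norm_sub_smul (fun _ => Nat.one_div_pos_of_nat)
    tendsto_one_div_add_atTop_nhds_zero_nat fun n => ?_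
  refine (hle n).trans_eq ?_
  rw [hz n]
  congr 1
  module

lemma IsNearestPoint.ae_norm_sub_le (hG : L0Convex μ d G) {x y p q : L0 μ d}
    (hp : IsNearestPoint G x p) (hq : IsNearestPoint G y q) :
    ∀ᵐ ω ∂μ, ‖p ω - q ω‖ ≤ ‖x ω - y ω‖ := by
  filter_upwards [hp.ae_inner_nonpos hG hq.1, hq.ae_inner_nonpos hG hp.1] with ω hpω hqω
  exact norm_sub_le_of_real_inner_nonpos hpω hqω

lemma IsNearestPoint.unique (hG : L0Convex μ d G) {x p q : L0 μ d} (hp : IsNearestPoint G x p)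
    (hq : IsNearestPoint G x q) : p = q :=
  AEEqFun.ext <| (hp.ae_norm_sub_le hG hq).mono fun ω h =>
    sub_eq_zero.1 (norm_le_zero_iff.1 (by simpa using h))

end L0

theorem random_projection_general {Ω : Type*} [MeasurableSpace Ω] (μ : Measure Ω)
    [IsProbabilityMeasure μ] (d : ℕ)
    (G : Set (L0 μ d)) (hne : G.Nonempty) (hcl : TelClosed μ d G) (hconv : L0Convex μ d G) :
    ∃ P : L0 μ d → L0 μ d,
      (∀ x, P x ∈ G) ∧
      -- `P x` minimizes the random distance to `x` among all elements of `G`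
      (∀ x, ∀ g ∈ G, ∀ᵐ ω ∂μ, ‖x ω - P x ω‖ ≤ ‖x ω - g ω‖) ∧
      -- uniqueness of the minimizer
      (∀ x, ∀ q ∈ G, (∀ g ∈ G, ∀ᵐ ω ∂μ, ‖x ω - q ω‖ ≤ ‖x ω - g ω‖) → q = P x) ∧
      -- nonexpansiveness
      (∀ x y, ∀ᵐ ω ∂μ, ‖P x ω - P y ω‖ ≤ ‖x ω - y ω‖) := by
  choose P hP using exists_isNearestPoint hne hcl hconv
  exact ⟨P, fun x => (hP x).1, fun x => (hP x).2,
    fun x q hq hqx => IsNearestPoint.unique hconv ⟨hq, hqx⟩ (hP x),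
    fun x y => (hP x).ae_norm_sub_le hconv (hP y)⟩

/-- Random projection onto a `𝒯_{ε,λ}`-closed L⁰-convex subset of
`L⁰(𝓕,ℝ^d)`: existence, uniqueness, and nonexpansiveness. -/
theorem random_projection {Ω : Type*} [MeasurableSpace Ω] (μ : Measure Ω)
    [IsProbabilityMeasure μ] (d : ℕ) (hd : 0 < d)
    (G : Set (L0 μ d)) (hne : G.Nonempty) (hcl : TelClosed μ d G) (hconv : L0Convex μ d G) :
    ∃ P : L0 μ d → L0 μ d,
      (∀ x, P x ∈ G) ∧
      -- `P x` minimizes the random distance to `x` among all elements of `G`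
      (∀ x, ∀ g ∈ G, ∀ᵐ ω ∂μ, ‖x ω - P x ω‖ ≤ ‖x ω - g ω‖) ∧
      -- uniqueness of the minimizer
      (∀ x, ∀ q ∈ G, (∀ g ∈ G, ∀ᵐ ω ∂μ, ‖x ω - q ω‖ ≤ ‖x ω - g ω‖) → q = P x) ∧
      -- nonexpansiveness
      (∀ x y, ∀ᵐ ω ∂μ, ‖P x ω - P y ω‖ ≤ ‖x ω - y ω‖) :=
  random_projection_general μ d G hne hcl hconv

end RandomBrouwer
end
end

section
/- Let G be a σ-stable subset of L⁰(𝓕,ℝ^d) and h : G → G a map. Then h is local if and only if h is σ-stable. -/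
open MeasureTheory Filter Set Topology

noncomputable section

namespace RandomBrouwer

variable {Ω : Type*} [MeasurableSpace Ω]

variable (μ : Measure Ω) (d : ℕ)

def pairPartition (A : Set Ω) : ℕ → Set Ω
  | 0 => A
  | 1 => Aᶜ
  | _ => ∅

theorem isPartition_pairPartition {A : Set Ω} (hA : MeasurableSet A) :
    IsPartition (pairPartition A) := by
  refine ⟨?_, ?_, ?_⟩
  · rintro (_ | _ | n)
    exacts [hA, hA.compl, MeasurableSet.empty]
  · rintro (_ | _ | m) (_ | _ | n) hmn <;>
      simp_all [pairPartition, disjoint_compl_left, disjoint_compl_right]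
  · refine eq_univ_of_forall fun ω => mem_iUnion.2 ?_
    by_cases hω : ω ∈ A
    exacts [⟨0, hω⟩, ⟨1, hω⟩]

theorem isConcat_pairPartition {β : Type*} [TopologicalSpace β] {A : Set Ω}
    {x y : Ω →ₘ[μ] β} (hxy : ∀ᵐ ω ∂μ, ω ∈ A → x ω = y ω) :
    IsConcat μ (pairPartition A) (fun n => if n = 0 then y else x) x := by
  rintro (_ | _ | n)
  · exact hxy
  · exact ae_of_all μ fun _ _ => rfl
  · exact ae_of_all μ fun _ hω => hω.elim

theorem LocalOn.sigmaStableMapOn {G : Set (L0 μ d)} {h : L0 μ d → L0 μ d}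
    (hloc : LocalOn μ d G h) : SigmaStableMapOn μ d G h :=
  fun A hA v hv z hz hzv n => hloc z hz (v n) (hv n) (A n) (hA.1 n) (hzv n)

/-- `x` is the concatenation of `y` on `A` and of `x` itself off `A`, so σ-stability of `h`
forces `h x = h y` on `A`. -/
theorem SigmaStableMapOn.localOn {G : Set (L0 μ d)} {h : L0 μ d → L0 μ d}
    (hσ : SigmaStableMapOn μ d G h) : LocalOn μ d G h := by
  intro x hx y hy A hA hxy
  have hv : ∀ n, (if n = 0 then y else x) ∈ G := fun n => by split <;> assumption
  exact hσ _ (isPartition_pairPartition hA) _ hv x hx (isConcat_pairPartition μ hxy) 0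

theorem local_iff_sigmaStable_general {Ω : Type*} [MeasurableSpace Ω] (μ : Measure Ω) (d : ℕ)
    (G : Set (L0 μ d)) (h : L0 μ d → L0 μ d) :
    LocalOn μ d G h ↔ SigmaStableMapOn μ d G h :=
  ⟨LocalOn.sigmaStableMapOn μ d, SigmaStableMapOn.localOn μ d⟩

/-- On a σ-stable subset of `L⁰(𝓕,ℝ^d)`, a self-map is local iff it is
σ-stable. -/
theorem local_iff_sigmaStable {Ω : Type*} [MeasurableSpace Ω] (μ : Measure Ω)
    [IsProbabilityMeasure μ] (d : ℕ) (hd : 0 < d)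
    (G : Set (L0 μ d)) (hstab : SigmaStable μ d G)
    (h : L0 μ d → L0 μ d) (hmaps : Set.MapsTo h G G) :
    LocalOn μ d G h ↔ SigmaStableMapOn μ d G h :=
  local_iff_sigmaStable_general μ d G h

end RandomBrouwer
end
end
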